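/- arXiv:1808.09696 — 7 statements merged into one kernel-verified Lean document; each statement's English description precedes it below -/
import Mathlib

section
/- Let p be a rank one projection in a complex semisimple unital Banach algebra A, and let J_p denote the two-sided ideal generated by p. If q is a rank one projection belonging to J_p, then q ∈ ApA, i.e., q = x p y for some x, y ∈ A. -/
/-!
Compressing `q = q q q` by `q` turns each summand `xᵢ p yᵢ` of `q ∈ J_p` into
`q xᵢ p yᵢ q = cᵢ q`, so `q = (∑ cᵢ) q`. Either every `cᵢ` vanishes and `q = 0`, or some
`cᵢ ≠ 0` and `q = (cᵢ⁻¹ q xᵢ) p (yᵢ q)`.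
-/

noncomputable section

/-- A rank one (minimal) projection: a nonzero idempotent `p` with `p A p = ℂ p`. -/
def IsMinimalProjection {A : Type*} [Ring A] [Algebra ℂ A] (p : A) : Prop :=
  p ≠ 0 ∧ IsIdempotentElem p ∧ ∀ a : A, ∃ c : ℂ, p * a * p = c • p

/-- The two-sided ideal generated by `p`: finite sums `∑ xᵢ p yᵢ`. -/
def idealGen {A : Type*} [Ring A] (p : A) : Set A :=
  {a | ∃ (n : ℕ) (x y : Fin n → A), a = ∑ i, x i * p * y i}

open Finset

section

variable {K A : Type*} [Field K] [Ring A] [Algebra K A]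

theorem IsIdempotentElem.eq_sum_mul_mul_of_mem_idealGen {p q : A} (hq : IsIdempotentElem q)
    (h : q ∈ idealGen p) :
    ∃ (n : ℕ) (x y : Fin n → A), q = ∑ i, q * (x i * p * y i) * q := by
  obtain ⟨n, x, y, hsum⟩ := h
  refine ⟨n, x, y, ?_⟩
  calc q = q * q * q := by rw [hq.eq, hq.eq]
    _ = ∑ i, q * (x i * p * y i) * q := by
      conv_lhs => enter [1, 2]; rw [hsum]
      rw [mul_sum, sum_mul]

theorem exists_eq_mul_mul_of_mul_mul_eq_smul {p q a b : A} {c : K} (hc : c ≠ 0)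
    (h : q * (a * p * b) * q = c • q) : ∃ x y : A, q = x * p * y :=
  ⟨c⁻¹ • (q * a), b * q, by
    rw [smul_mul_assoc, smul_mul_assoc, eq_inv_smul_iff₀ hc, ← h]
    simp only [mul_assoc]⟩

theorem exists_eq_mul_mul_of_mem_idealGen {p q : A} (hq : IsIdempotentElem q)
    (hcorner : ∀ a : A, ∃ c : K, q * a * q = c • q) (h : q ∈ idealGen p) :
    ∃ x y : A, q = x * p * y := by
  obtain ⟨n, x, y, hsum⟩ := hq.eq_sum_mul_mul_of_mem_idealGen h
  choose c hc using fun i => hcorner (x i * p * y i)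
  by_cases hzero : ∀ i, c i = 0
  · refine ⟨0, 0, ?_⟩
    rw [hsum, zero_mul, zero_mul]
    exact sum_eq_zero fun i _ => by rw [hc i, hzero i, zero_smul]
  · obtain ⟨i, hi⟩ := not_forall.mp hzero
    exact exists_eq_mul_mul_of_mul_mul_eq_smul hi (hc i)

end

theorem mem_idealGen_imp_mem_ApA_general {A : Type*} [NormedRing A] [NormedAlgebra ℂ A]
    (p q : A) (hq : IsMinimalProjection q)
    (hqJ : q ∈ idealGen p) :
    ∃ x y : A, q = x * p * y :=
  exists_eq_mul_mul_of_mem_idealGen hq.2.1 hq.2.2 hqJ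

theorem mem_idealGen_imp_mem_ApA {A : Type*} [NormedRing A] [NormedAlgebra ℂ A]
    [CompleteSpace A]
    (hss : ∀ a : A, (∀ x : A, spectrum ℂ (a * x) ⊆ {0}) → a = 0)
    (p q : A) (hp : IsMinimalProjection p) (hq : IsMinimalProjection q)
    (hqJ : q ∈ idealGen p) :
    ∃ x y : A, q = x * p * y :=
  mem_idealGen_imp_mem_ApA_general p q hq hqJ
end
end

section
/- Let p be a rank one projection in a complex semisimple unital Banach algebra A. A rank one projection q belongs to the ideal J_p generated by p if and only if q lies in the similarity orbit E_p = { u p u⁻¹ : u ∈ G₁(A) } of p under the principal component of the invertible group. -/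
noncomputable section

section AuxLemmas

set_option linter.unusedSectionVars false

variable {A : Type*} [NormedRing A] [NormedAlgebra ℂ A]

private lemma aux_one_add_mul_one_sub (w : A) (h : w * w = 0) : (1 + w) * (1 - w) = 1 := by
  have e : (1 + w) * (1 - w) = 1 - w * w := by noncomm_ring
  rw [e, h, sub_zero]

private lemma aux_one_sub_mul_one_add (w : A) (h : w * w = 0) : (1 - w) * (1 + w) = 1 := by
  have e : (1 - w) * (1 + w) = 1 - w * w := by noncomm_ring
  rw [e, h, sub_zero]

private lemma aux_triple (w₁ w₂ w₃ : A) (h1 : w₁ * w₁ = 0) (h2 : w₂ * w₂ = 0)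
    (h3 : w₃ * w₃ = 0) :
    ((1 + w₁) * (1 + w₂) * (1 + w₃)) * ((1 - w₃) * (1 - w₂) * (1 - w₁)) = 1 := by
  have e : ((1 + w₁) * (1 + w₂) * (1 + w₃)) * ((1 - w₃) * (1 - w₂) * (1 - w₁))
      = (1 + w₁) * ((1 + w₂) * (((1 + w₃) * (1 - w₃)) * ((1 - w₂) * (1 - w₁)))) := by
    noncomm_ring
  rw [e, aux_one_add_mul_one_sub w₃ h3, one_mul,
    ← mul_assoc (1 + w₂), aux_one_add_mul_one_sub w₂ h2, one_mul,
    aux_one_add_mul_one_sub w₁ h1]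

private lemma aux_triple' (w₁ w₂ w₃ : A) (h1 : w₁ * w₁ = 0) (h2 : w₂ * w₂ = 0)
    (h3 : w₃ * w₃ = 0) :
    ((1 - w₃) * (1 - w₂) * (1 - w₁)) * ((1 + w₁) * (1 + w₂) * (1 + w₃)) = 1 := by
  have e : ((1 - w₃) * (1 - w₂) * (1 - w₁)) * ((1 + w₁) * (1 + w₂) * (1 + w₃))
      = (1 - w₃) * ((1 - w₂) * (((1 - w₁) * (1 + w₁)) * ((1 + w₂) * (1 + w₃)))) := by
    noncomm_ring
  rw [e, aux_one_sub_mul_one_add w₁ h1, one_mul,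
    ← mul_assoc (1 - w₂), aux_one_sub_mul_one_add w₂ h2, one_mul,
    aux_one_sub_mul_one_add w₃ h3]

private lemma aux_mem_cc (u : Aˣ)
    (f g : ℂ → A) (hf : Continuous f) (hg : Continuous g)
    (hfg : ∀ t, f t * g t = 1) (hgf : ∀ t, g t * f t = 1)
    (h0 : f 0 = 1) (h1 : f 1 = (u : A)) : u ∈ connectedComponent (1 : Aˣ) := by
  set F : ℂ → Aˣ := fun t => ⟨f t, g t, hfg t, hgf t⟩ with hF
  have hFc : Continuous F := by
    rw [Units.continuous_iff]; exact ⟨hf, hg⟩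
  have h := (isPreconnected_range hFc).subset_connectedComponent
    (Set.mem_range_self 0) (Set.mem_range_self 1)
  have e0 : F 0 = 1 := Units.ext h0
  have e1 : F 1 = u := Units.ext h1
  rwa [e0, e1] at h

set_option maxHeartbeats 1000000 in
/-- The core similarity construction: if `p`, `q` are idempotents linked by `a`, `b`
with `a * b = q`, `b * a = p` (suitably normalized), then `q` is conjugate to `p` by an
element of the principal component of the invertible group. -/
private lemma aux_key (p q a b : A) (ν μ : ℂ)
    (hp2 : p*p = p) (hq2 : q*q = q) (hab : a*b = q) (hba : b*a = p)
    (hap : a*p = a) (hqa : q*a = a) (hpb : p*b = b) (hbq : b*q = b)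
    (hpa : p*a = ν•p) (haq : a*q = ν•q) (hbp : b*p = μ•p) (hqb : q*b = μ•q)
    (ha2 : a*a = ν•a) (hb2 : b*b = μ•b) (hpq : p*q = ν•b) (hqp : q*p = μ•a) :
    ∃ u : Aˣ, u ∈ connectedComponent (1 : Aˣ) ∧
      q = (u : A) * p * ((u⁻¹ : Aˣ) : A) := by
  by_cases hone : μ * ν = 1
  · -- "general position" case : `u = 1 + m` with `m` nilpotent of order 3
    set m : A := (2*μ)•a - p - q with hm
    have hmp : m * p = μ•a - p := by
      rw [hm]; simp only [sub_mul, smul_mul_assoc, hap, hp2, hqp]; module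
    have hqm : q * m = μ•a - q := by
      rw [hm]; simp only [mul_sub, mul_smul_comm, hqa, hqp, hq2]; module
    have hm2 : m * m = μ•a + ν•b - p - q := by
      rw [hm]
      simp only [mul_sub, sub_mul, smul_mul_assoc, mul_smul_comm, smul_smul,
        hp2, hq2, hap, hqa, hpa, haq, ha2, hpq, hqp]
      match_scalars
      · linear_combination (4*μ)*hone
      · linear_combination (-2 : ℂ)*hone
      · linear_combination (-2 : ℂ)*hone
      · ring
    have hm3 : m * (m * m) = 0 := by
      rw [hm2, hm]
      simp only [mul_sub, sub_mul, mul_add, add_mul, smul_mul_assoc, mul_smul_comm, smul_smul,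
        hp2, hq2, hab, hba, hap, hqa, hpb, hbq, hpa, haq, hbp, hqb, ha2, hb2, hpq, hqp]
      match_scalars
      · linear_combination (2*μ)*hone
      · linear_combination -hone
      · linear_combination -hone
      · ring
    have hm3' : m * m * m = 0 := by rw [mul_assoc]; exact hm3
    have hu1 : (1 + m) * (1 - m + m*m) = 1 := by
      have e : (1 + m) * (1 - m + m*m) = 1 + m*(m*m) := by noncomm_ring
      rw [e, hm3, add_zero]
    have hu2 : (1 - m + m*m) * (1 + m) = 1 := by
      have e : (1 - m + m*m) * (1 + m) = 1 + m*m*m := by noncomm_ring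
      rw [e, hm3', add_zero]
    refine ⟨⟨1 + m, 1 - m + m*m, hu1, hu2⟩, ?_, ?_⟩
    · refine aux_mem_cc _ (fun t => 1 + t•m) (fun t => 1 - t•m + (t*t)•(m*m))
        (by fun_prop) (by fun_prop) (fun t => ?_) (fun t => ?_) (by simp) (by simp)
      · simp only [mul_add, add_mul, mul_sub, sub_mul, one_mul, mul_one, smul_mul_assoc,
          mul_smul_comm, smul_smul, hm3, hm3', smul_zero]
        module
      · simp only [mul_add, add_mul, mul_sub, sub_mul, one_mul, mul_one, smul_mul_assoc,
          mul_smul_comm, smul_smul, hm3, hm3', smul_zero]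
        module
    · have hup : (1 + m) * p = q * (1 + m) := by
        rw [add_mul, one_mul, mul_add, mul_one, hmp, hqm]; module
      show q = (1 + m) * p * (1 - m + m*m)
      calc q = q * ((1 + m) * (1 - m + m*m)) := by rw [hu1, mul_one]
      _ = (q * (1 + m)) * (1 - m + m*m) := by rw [mul_assoc]
      _ = ((1 + m) * p) * (1 - m + m*m) := by rw [hup]
  · -- generic case : `u` is a product of three unipotent elements
    have hD : (1:ℂ) - μ*ν ≠ 0 := fun h => hone (sub_eq_zero.mp h).symm
    obtain ⟨c₁, hc₁⟩ : ∃ c : ℂ, c*(1-μ*ν) = 1-μ := ⟨(1-μ)/(1-μ*ν), div_mul_cancel₀ _ hD⟩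
    obtain ⟨c₂, hc₂⟩ : ∃ c : ℂ, c*(1-μ*ν) = 1-ν := ⟨(1-ν)/(1-μ*ν), div_mul_cancel₀ _ hD⟩
    have hs2 : c₂ + c₁*ν = 1 :=
      mul_right_cancel₀ hD (by linear_combination hc₂ + ν*hc₁)
    set n₁ : A := a - ν•p with hn₁
    set n₂ : A := b - μ•p with hn₂
    have hn₁p : n₁ * p = n₁ := by
      rw [hn₁]; simp only [sub_mul, smul_mul_assoc, hap, hp2]
    have hn₂p : n₂ * p = 0 := by
      rw [hn₂]; simp only [sub_mul, smul_mul_assoc, hbp, hp2]; module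
    have hn₂n₁ : n₂ * n₁ = (1-μ*ν)•p := by
      rw [hn₁, hn₂]
      simp only [sub_mul, mul_sub, smul_mul_assoc, mul_smul_comm, smul_smul,
        hba, hbp, hpa, hp2]
      module
    have hn₁n₁ : n₁ * n₁ = 0 := by
      rw [hn₁]
      simp only [sub_mul, mul_sub, smul_mul_assoc, mul_smul_comm, smul_smul,
        ha2, hap, hpa, hp2]
      module
    have hn₂n₂ : n₂ * n₂ = 0 := by
      rw [hn₂]
      simp only [sub_mul, mul_sub, smul_mul_assoc, mul_smul_comm, smul_smul,
        hb2, hbp, hpb, hp2]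
      module
    have hqn₁ : q * n₁ = (1-μ*ν)•a := by
      rw [hn₁]; simp only [mul_sub, mul_smul_comm, hqa, hqp, smul_smul]; module
    have hqn₂ : q * n₂ = μ•q - (μ*μ)•a := by
      rw [hn₂]; simp only [mul_sub, mul_smul_comm, hqb, hqp, smul_smul]; try module
    have han₂ : a * n₂ = q - μ•a := by
      rw [hn₂]; simp only [mul_sub, mul_smul_comm, hab, hap]
    have han₁ : a * n₁ = 0 := by
      rw [hn₁]; simp only [mul_sub, mul_smul_comm, ha2, hap]; module
    -- the conjugating element
    have e1 : (1 + c₂•n₁) * p = p + c₂•n₁ := by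
      rw [add_mul, one_mul, smul_mul_assoc, hn₁p]
    have e2 : (1 - n₂) * (p + c₂•n₁) = ν•p + c₂•n₁ := by
      rw [sub_mul, one_mul, mul_add, hn₂p, mul_smul_comm, hn₂n₁, smul_smul]
      match_scalars <;> first | ring1 | linear_combination -hc₂
    have e3 : (1 + c₁•n₁) * (ν•p + c₂•n₁) = a := by
      have e3' : (1 + c₁•n₁) * (ν•p + c₂•n₁) = ν•p + (c₂ + c₁*ν)•n₁ := by
        simp only [add_mul, one_mul, smul_mul_assoc, mul_add, mul_smul_comm, hn₁p, hn₁n₁,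
          smul_zero, add_zero, smul_smul]
        module
      rw [e3', hs2, one_smul, hn₁]; abel
    have f1 : q * (1 + c₁•n₁) = q + (1-μ)•a := by
      rw [mul_add, mul_one, mul_smul_comm, hqn₁, smul_smul]
      match_scalars <;> first | ring1 | linear_combination hc₁
    have f2 : (q + (1-μ)•a) * (1 - n₂) = a := by
      simp only [add_mul, mul_sub, mul_one, smul_mul_assoc, mul_smul_comm, smul_sub,
        smul_smul, hqn₂, han₂]
      match_scalars <;> ring1
    have f3 : a * (1 + c₂•n₁) = a := by
      rw [mul_add, mul_one, mul_smul_comm, han₁, smul_zero, add_zero]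
    set u : A := (1 + c₁•n₁) * (1 - n₂) * (1 + c₂•n₁) with hu
    set v : A := (1 - c₂•n₁) * (1 + n₂) * (1 - c₁•n₁) with hv
    have hw₁ : (c₁•n₁) * (c₁•n₁) = 0 := by
      rw [smul_mul_assoc, mul_smul_comm, hn₁n₁, smul_zero, smul_zero]
    have hw₂ : (-n₂) * (-n₂) = 0 := by rw [neg_mul_neg, hn₂n₂]
    have hw₃ : (c₂•n₁) * (c₂•n₁) = 0 := by
      rw [smul_mul_assoc, mul_smul_comm, hn₁n₁, smul_zero, smul_zero]
    have huv : u * v = 1 := by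
      have := aux_triple (c₁•n₁) (-n₂) (c₂•n₁) hw₁ hw₂ hw₃
      simpa only [← sub_eq_add_neg, sub_neg_eq_add] using this
    have hvu : v * u = 1 := by
      have := aux_triple' (c₁•n₁) (-n₂) (c₂•n₁) hw₁ hw₂ hw₃
      simpa only [← sub_eq_add_neg, sub_neg_eq_add] using this
    have hup : u * p = a := by
      rw [hu, mul_assoc, e1, mul_assoc, e2, e3]
    have hqu : q * u = a := by
      rw [hu, ← mul_assoc, ← mul_assoc, f1, f2, f3]
    refine ⟨⟨u, v, huv, hvu⟩, ?_, ?_⟩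
    · refine aux_mem_cc _
        (fun t => (1 + (t*c₁)•n₁) * (1 - t•n₂) * (1 + (t*c₂)•n₁))
        (fun t => (1 - (t*c₂)•n₁) * (1 + t•n₂) * (1 - (t*c₁)•n₁))
        (by fun_prop) (by fun_prop) (fun t => ?_) (fun t => ?_) (by simp) ?_
      · have h1 : ((t*c₁)•n₁) * ((t*c₁)•n₁) = 0 := by
          rw [smul_mul_assoc, mul_smul_comm, hn₁n₁, smul_zero, smul_zero]
        have h2 : (-(t•n₂)) * (-(t•n₂)) = 0 := by
          rw [neg_mul_neg, smul_mul_assoc, mul_smul_comm, hn₂n₂, smul_zero, smul_zero]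
        have h3 : ((t*c₂)•n₁) * ((t*c₂)•n₁) = 0 := by
          rw [smul_mul_assoc, mul_smul_comm, hn₁n₁, smul_zero, smul_zero]
        have := aux_triple ((t*c₁)•n₁) (-(t•n₂)) ((t*c₂)•n₁) h1 h2 h3
        simpa only [← sub_eq_add_neg, sub_neg_eq_add] using this
      · have h1 : ((t*c₁)•n₁) * ((t*c₁)•n₁) = 0 := by
          rw [smul_mul_assoc, mul_smul_comm, hn₁n₁, smul_zero, smul_zero]
        have h2 : (-(t•n₂)) * (-(t•n₂)) = 0 := by
          rw [neg_mul_neg, smul_mul_assoc, mul_smul_comm, hn₂n₂, smul_zero, smul_zero]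
        have h3 : ((t*c₂)•n₁) * ((t*c₂)•n₁) = 0 := by
          rw [smul_mul_assoc, mul_smul_comm, hn₁n₁, smul_zero, smul_zero]
        have := aux_triple' ((t*c₁)•n₁) (-(t•n₂)) ((t*c₂)•n₁) h1 h2 h3
        simpa only [← sub_eq_add_neg, sub_neg_eq_add] using this
      · show (1 + ((1:ℂ)*c₁)•n₁) * (1 - (1:ℂ)•n₂) * (1 + ((1:ℂ)*c₂)•n₁) = _
        rw [one_mul, one_mul, one_smul]
    · show q = u * p * v
      calc q = q * (u * v) := by rw [huv, mul_one]
      _ = (q * u) * v := (mul_assoc q u v).symm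
      _ = a * v := by rw [hqu]
      _ = (u * p) * v := by rw [hup]

end AuxLemmas

set_option maxHeartbeats 1000000 in
theorem mem_idealGen_iff_similar {A : Type*} [NormedRing A] [NormedAlgebra ℂ A]
    [CompleteSpace A]
    (hss : ∀ a : A, (∀ x : A, spectrum ℂ (a * x) ⊆ {0}) → a = 0)
    (p q : A) (hp : IsMinimalProjection p) (hq : IsMinimalProjection q) :
    q ∈ idealGen p ↔
      ∃ u : Aˣ, u ∈ connectedComponent (1 : Aˣ) ∧ q = (u : A) * p * ((u⁻¹ : Aˣ) : A) := by
  constructor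
  · intro hmem
    -- Step 1: extract `a`, `b` with `a * b = q`, `b * a = p`
    obtain ⟨a, b, hab, hba, hap, hqa, hpb, hbq⟩ :
        ∃ a b : A, a * b = q ∧ b * a = p ∧ a * p = a ∧ q * a = a ∧ p * b = b ∧ b * q = b := by
      obtain ⟨n, x, y, hsum⟩ := hmem
      have hp2 : p * p = p := hp.2.1
      have hq2 : q * q = q := hq.2.1
      have hp2' : ∀ z : A, p * (p * z) = p * z := fun z => by rw [← mul_assoc, hp2]
      have hq2' : ∀ z : A, q * (q * z) = q * z := fun z => by rw [← mul_assoc, hq2]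
      have key1 : q = ∑ i, (q * x i * p) * (p * y i * q) := by
        calc q = q * (∑ i, x i * p * y i) * q := by rw [← hsum, hq2, hq2]
        _ = ∑ i, q * (x i * p * y i) * q := by rw [Finset.mul_sum, Finset.sum_mul]
        _ = ∑ i, (q * x i * p) * (p * y i * q) := by
            refine Finset.sum_congr rfl fun i _ => ?_
            simp only [mul_assoc, hp2']
      have key2 : ∃ i j, (p * y i * q) * (q * x j * p) ≠ 0 := by
        by_contra hcon
        push_neg at hcon
        apply hq.1
        calc q = q * q := hq2.symm
        _ = (∑ i, (q * x i * p) * (p * y i * q)) * (∑ j, (q * x j * p) * (p * y j * q)) := by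
            rw [← key1]
        _ = ∑ i, ∑ j, ((q * x i * p) * (p * y i * q)) * ((q * x j * p) * (p * y j * q)) := by
            rw [Finset.sum_mul_sum]
        _ = 0 := by
            refine Finset.sum_eq_zero fun i _ => Finset.sum_eq_zero fun j _ => ?_
            calc ((q * x i * p) * (p * y i * q)) * ((q * x j * p) * (p * y j * q))
                = (q * x i * p) * (((p * y i * q) * (q * x j * p)) * (p * y j * q)) := by
                  simp only [mul_assoc]
            _ = 0 := by rw [hcon i j, zero_mul, mul_zero]
      obtain ⟨i, j, hne⟩ := key2
      obtain ⟨c, hc⟩ := hp.2.2 (y i * q * x j)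
      have hYX : (p * y i * q) * (q * x j * p) = c • p := by
        calc (p * y i * q) * (q * x j * p) = p * (y i * (q * (q * (x j * p)))) := by
              simp only [mul_assoc]
        _ = p * (y i * (q * (x j * p))) := by rw [hq2']
        _ = c • p := by simpa only [mul_assoc] using hc
      have hc0 : c ≠ 0 := fun h0 => hne (by rw [hYX, h0, zero_smul])
      obtain ⟨d, hd⟩ := hq.2.2 (x j * p * y i)
      have hXY : (q * x j * p) * (p * y i * q) = d • q := by
        calc (q * x j * p) * (p * y i * q) = q * (x j * (p * (p * (y i * q)))) := by
              simp only [mul_assoc]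
        _ = q * (x j * (p * (y i * q))) := by rw [hp2']
        _ = d • q := by simpa only [mul_assoc] using hd
      set X : A := q * x j * p with hX
      set Y : A := p * y i * q with hY
      have hXp : X * p = X := by rw [hX, mul_assoc, hp2]
      have hqX : q * X = X := by rw [hX, ← mul_assoc, ← mul_assoc, hq2]
      have hpY : p * Y = Y := by rw [hY, ← mul_assoc, ← mul_assoc, hp2]
      have hYq : Y * q = Y := by rw [hY, mul_assoc, hq2]
      have hba' : Y * (c⁻¹ • X) = p := by
        rw [mul_smul_comm, hYX, smul_smul, inv_mul_cancel₀ hc0, one_smul]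
      have habe : (c⁻¹ • X) * Y = (c⁻¹ * d) • q := by
        rw [smul_mul_assoc, hXY, smul_smul]
      have h1 : ((c⁻¹ • X) * Y) * ((c⁻¹ • X) * Y) = (c⁻¹ • X) * Y := by
        calc ((c⁻¹ • X) * Y) * ((c⁻¹ • X) * Y) = (c⁻¹ • X) * ((Y * (c⁻¹ • X)) * Y) := by
              simp only [mul_assoc]
        _ = (c⁻¹ • X) * (p * Y) := by rw [hba']
        _ = (c⁻¹ • X) * Y := by rw [hpY]
      rw [habe] at h1
      have h1' : ((c⁻¹ * d) * (c⁻¹ * d)) • q = (c⁻¹ * d) • q := by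
        rw [← h1, smul_mul_assoc, mul_smul_comm, hq2, smul_smul]
      have h2 : ((c⁻¹ * d) * (c⁻¹ * d) - (c⁻¹ * d)) • q = 0 := by
        rw [sub_smul, h1', sub_self]
      have he : c⁻¹ * d = 1 := by
        rcases smul_eq_zero.mp h2 with h3 | h3
        · have h4 : (c⁻¹ * d) * ((c⁻¹ * d) - 1) = 0 := by linear_combination h3
          rcases mul_eq_zero.mp h4 with h5 | h5
          · exfalso
            apply hp.1
            have hab0 : (c⁻¹ • X) * Y = 0 := by rw [habe, h5, zero_smul]
            calc p = (Y * (c⁻¹ • X)) * (Y * (c⁻¹ • X)) := by rw [hba', hp2]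
            _ = Y * (((c⁻¹ • X) * Y) * (c⁻¹ • X)) := by simp only [mul_assoc]
            _ = 0 := by rw [hab0, zero_mul, mul_zero]
          · exact sub_eq_zero.mp h5
        · exact absurd h3 hq.1
      refine ⟨c⁻¹ • X, Y, ?_, hba', ?_, ?_, hpY, hYq⟩
      · rw [habe, he, one_smul]
      · rw [smul_mul_assoc, hXp]
      · rw [mul_smul_comm, hqX]
    -- Step 2: derive the multiplication table
    have hp2 : p * p = p := hp.2.1
    have hq2 : q * q = q := hq.2.1
    obtain ⟨ν, hν⟩ := hp.2.2 a
    have hpa : p * a = ν • p := by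
      conv_lhs => rw [← hap, ← mul_assoc]
      exact hν
    obtain ⟨ν₂, hν₂⟩ := hq.2.2 a
    have haq2 : a * q = ν₂ • q := by
      conv_lhs => rw [← hqa]
      exact hν₂
    have ha0 : a ≠ 0 := fun h => hp.1 (by rw [← hba, h, mul_zero])
    have ha2 : a * a = ν • a := by
      calc a * a = (a * p) * a := by rw [hap]
      _ = a * (p * a) := mul_assoc a p a
      _ = a * (ν • p) := by rw [hpa]
      _ = ν • (a * p) := mul_smul_comm ν a p
      _ = ν • a := by rw [hap]
    have ha2' : a * a = ν₂ • a := by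
      calc a * a = a * (q * a) := by rw [hqa]
      _ = (a * q) * a := (mul_assoc a q a).symm
      _ = (ν₂ • q) * a := by rw [haq2]
      _ = ν₂ • (q * a) := smul_mul_assoc ν₂ q a
      _ = ν₂ • a := by rw [hqa]
    have hνeq : ν₂ = ν := by
      have h0 : (ν₂ - ν) • a = 0 := by rw [sub_smul, ← ha2, ← ha2', sub_self]
      rcases smul_eq_zero.mp h0 with h | h
      · exact sub_eq_zero.mp h
      · exact absurd h ha0
    rw [hνeq] at haq2
    obtain ⟨μ, hμ⟩ := hp.2.2 b
    have hbp : b * p = μ • p := by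
      conv_lhs => rw [← hpb]
      exact hμ
    obtain ⟨μ₂, hμ₂⟩ := hq.2.2 b
    have hqb2 : q * b = μ₂ • q := by
      conv_lhs => rw [← hbq, ← mul_assoc]
      exact hμ₂
    have hb0 : b ≠ 0 := fun h => hp.1 (by rw [← hba, h, zero_mul])
    have hb2 : b * b = μ • b := by
      calc b * b = b * (p * b) := by rw [hpb]
      _ = (b * p) * b := (mul_assoc b p b).symm
      _ = (μ • p) * b := by rw [hbp]
      _ = μ • (p * b) := smul_mul_assoc μ p b
      _ = μ • b := by rw [hpb]
    have hb2' : b * b = μ₂ • b := by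
      calc b * b = (b * q) * b := by rw [hbq]
      _ = b * (q * b) := mul_assoc b q b
      _ = b * (μ₂ • q) := by rw [hqb2]
      _ = μ₂ • (b * q) := mul_smul_comm μ₂ b q
      _ = μ₂ • b := by rw [hbq]
    have hμeq : μ₂ = μ := by
      have h0 : (μ₂ - μ) • b = 0 := by rw [sub_smul, ← hb2, ← hb2', sub_self]
      rcases smul_eq_zero.mp h0 with h | h
      · exact sub_eq_zero.mp h
      · exact absurd h hb0
    rw [hμeq] at hqb2
    have hpq : p * q = ν • b := by
      calc p * q = p * (a * b) := by rw [hab]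
      _ = (p * a) * b := (mul_assoc p a b).symm
      _ = (ν • p) * b := by rw [hpa]
      _ = ν • (p * b) := smul_mul_assoc ν p b
      _ = ν • b := by rw [hpb]
    have hqp : q * p = μ • a := by
      calc q * p = (a * b) * p := by rw [hab]
      _ = a * (b * p) := mul_assoc a b p
      _ = a * (μ • p) := by rw [hbp]
      _ = μ • (a * p) := mul_smul_comm μ a p
      _ = μ • a := by rw [hap]
    exact aux_key p q a b ν μ hp2 hq2 hab hba hap hqa hpb hbq hpa haq2 hbp hqb2 ha2 hb2 hpq hqp
  · rintro ⟨u, hu, hq'⟩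
    refine ⟨1, fun _ => (u : A), fun _ => ((u⁻¹ : Aˣ) : A), ?_⟩
    simpa using hq'
end
end

section
/- Let p be a rank one projection in a complex semisimple unital Banach algebra A and let J_p be the ideal it generates. Then any two minimal left ideals of A contained in J_p are isomorphic as (non-unital) Banach algebras; in particular, for any rank one projection q ∈ J_p, the map T_q : Ap → Aq given by T_q(xp) = v x p v⁻¹, where q = v p v⁻¹ with v ∈ G₁(A), is a continuous algebra isomorphism. -/
/-!
From `q ∈ J_p` one gets `q x p y q ≠ 0`, and minimality of `p` and `q` then yields `a ∈ qAp`,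
`b ∈ pAq` with `ab = q` and `ba = p`. As `qAp = ℂa` and `pAq = ℂb`, either `qp` or `pq` is a
nonzero multiple of `a` resp. `b`, or `pq = qp = 0`. In each case `p` and `q` are joined by a chain
of at most four idempotents in which neighbours generate the same left or the same right ideal.
Two idempotents with `pA = rA` are conjugate by `1 + (p - r)`, where `(p - r)² = 0`, so the segment
`t ↦ 1 + t(p - r)` of units puts the conjugating unit in `G₁(A)`.
-/

noncomputable section

section SquareZero

variable {A : Type*} [Ring A]

def Units.oneAddOfMulSelfEqZero {n : A} (h : n * n = 0) : Aˣ where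
  val := 1 + n
  inv := 1 - n
  val_inv := by rw [show (1 + n) * (1 - n) = 1 - n * n by noncomm_ring, h, sub_zero]
  inv_val := by rw [show (1 - n) * (1 + n) = 1 - n * n by noncomm_ring, h, sub_zero]

@[simp]
lemma Units.val_oneAddOfMulSelfEqZero {n : A} (h : n * n = 0) :
    (Units.oneAddOfMulSelfEqZero h : A) = 1 + n := rfl

@[simp]
lemma Units.val_inv_oneAddOfMulSelfEqZero {n : A} (h : n * n = 0) :
    ((Units.oneAddOfMulSelfEqZero h)⁻¹ : Aˣ) = (1 - n : A) := rfl

variable [TopologicalSpace A] [IsTopologicalRing A] [Algebra ℝ A] [ContinuousSMul ℝ A]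

lemma Units.oneAddOfMulSelfEqZero_mem_connectedComponent {n : A} (h : n * n = 0) :
    Units.oneAddOfMulSelfEqZero h ∈ connectedComponent 1 := by
  have hsq (t : ℝ) : (t • n) * (t • n) = 0 := by rw [smul_mul_smul_comm, h, smul_zero]
  let path : ℝ → Aˣ := fun t => Units.oneAddOfMulSelfEqZero (hsq t)
  have hpath : Continuous path :=
    Units.continuous_iff.2 ⟨show Continuous fun t : ℝ => 1 + t • n by fun_prop,
      show Continuous fun t : ℝ => 1 - t • n by fun_prop⟩
  refine (isPreconnected_range hpath).subset_connectedComponent ⟨0, ?_⟩ ⟨1, ?_⟩ <;>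
    ext <;> simp [path]

end SquareZero

section PrincipalConj

variable {A : Type*} [Ring A] [TopologicalSpace A] [IsTopologicalRing A]

/-- `q = v p v⁻¹` for some `v` in the principal component `G₁(A)` of the unit group. -/
def IsPrincipalConj (p q : A) : Prop :=
  ∃ v : Aˣ, v ∈ connectedComponent 1 ∧ q = v * p * ↑v⁻¹

lemma IsPrincipalConj.symm {p q : A} (h : IsPrincipalConj p q) : IsPrincipalConj q p := by
  obtain ⟨v, hv, rfl⟩ := h
  refine ⟨v⁻¹, (Subgroup.connectedComponentOfOne Aˣ).inv_mem hv, ?_⟩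
  simp [mul_assoc]

lemma IsPrincipalConj.trans {p q r : A} (hpq : IsPrincipalConj p q) (hqr : IsPrincipalConj q r) :
    IsPrincipalConj p r := by
  obtain ⟨v, hv, rfl⟩ := hpq
  obtain ⟨w, hw, rfl⟩ := hqr
  refine ⟨w * v, (Subgroup.connectedComponentOfOne Aˣ).mul_mem hw hv, ?_⟩
  simp [mul_assoc]

variable [Algebra ℝ A] [ContinuousSMul ℝ A]

/-- Idempotents generating the same right ideal `pA = rA` are conjugate by `1 + (p - r)`. -/
lemma isPrincipalConj_of_sameRightIdeal {p r : A} (hpr : p * r = r) (hrp : r * p = p) :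
    IsPrincipalConj p r := by
  have hpp : p * p = p := by nth_rewrite 2 [← hrp]; rw [← mul_assoc, hpr, hrp]
  have hrr : r * r = r := by nth_rewrite 2 [← hpr]; rw [← mul_assoc, hrp, hpr]
  have hsq : (p - r) * (p - r) = 0 := by
    simp only [sub_mul, mul_sub, hpp, hpr, hrp, hrr, sub_self]
  refine ⟨Units.oneAddOfMulSelfEqZero hsq,
    Units.oneAddOfMulSelfEqZero_mem_connectedComponent hsq, ?_⟩
  simp only [Units.val_oneAddOfMulSelfEqZero, Units.val_inv_oneAddOfMulSelfEqZero]
  have hleft : (1 + (p - r)) * p = p := by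
    rw [add_mul, sub_mul, one_mul, hpp, hrp, sub_self, add_zero]
  have hright : p * (1 - (p - r)) = r := by
    rw [mul_sub, mul_sub, mul_one, hpp, hpr, sub_sub_cancel]
  rw [hleft, hright]

/-- Idempotents generating the same left ideal `Ap = Ar` are conjugate by `1 + (r - p)`. -/
lemma isPrincipalConj_of_sameLeftIdeal {p r : A} (hrp : r * p = r) (hpr : p * r = p) :
    IsPrincipalConj p r := by
  have hpp : p * p = p := by nth_rewrite 1 [← hpr]; rw [mul_assoc, hrp, hpr]
  have hrr : r * r = r := by nth_rewrite 1 [← hrp]; rw [mul_assoc, hpr, hrp]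
  have hsq : (r - p) * (r - p) = 0 := by
    simp only [sub_mul, mul_sub, hpp, hpr, hrp, hrr, sub_self]
  refine ⟨Units.oneAddOfMulSelfEqZero hsq,
    Units.oneAddOfMulSelfEqZero_mem_connectedComponent hsq, ?_⟩
  simp only [Units.val_oneAddOfMulSelfEqZero, Units.val_inv_oneAddOfMulSelfEqZero]
  have hleft : (1 + (r - p)) * p = r := by
    rw [add_mul, sub_mul, one_mul, hrp, hpp, add_sub_cancel]
  have hright : r * (1 - (r - p)) = r := by
    rw [mul_sub, mul_sub, mul_one, hrr, hrp, sub_self, sub_zero]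
  rw [hleft, hright]

end PrincipalConj

section EquivalencePair

variable {A : Type*} [Ring A]

/-- `a ∈ qAp` and `b ∈ pAq` implement an algebraic equivalence of idempotents `p` and `q`. -/
structure IsEquivalencePair (p q a b : A) : Prop where
  q_mul_a : q * a = a
  a_mul_p : a * p = a
  p_mul_b : p * b = b
  b_mul_q : b * q = b
  a_mul_b : a * b = q
  b_mul_a : b * a = p

namespace IsEquivalencePair

variable {p q a b : A}

lemma symm (h : IsEquivalencePair p q a b) : IsEquivalencePair q p b a :=
  ⟨h.p_mul_b, h.b_mul_q, h.q_mul_a, h.a_mul_p, h.b_mul_a, h.a_mul_b⟩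

lemma mul_self_left (h : IsEquivalencePair p q a b) : p * p = p := by
  rw [← h.b_mul_a, mul_assoc, ← mul_assoc a, h.a_mul_b, ← mul_assoc, h.b_mul_q]

lemma exists_mul_eq_smul {𝕜 : Type*} [Field 𝕜] [Algebra 𝕜 A]
    (h : IsEquivalencePair p q a b) (hq : ∀ x, ∃ c : 𝕜, q * x * q = c • q) :
    ∃ t : 𝕜, q * p = t • a := by
  obtain ⟨t, ht⟩ := hq (p * b)
  refine ⟨t, ?_⟩
  calc q * p = q * b * a := by rw [mul_assoc, h.b_mul_a]
    _ = q * (p * b) * q * a := by rw [h.p_mul_b, mul_assoc q b q, h.b_mul_q]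
    _ = t • a := by rw [ht, smul_mul_assoc, h.q_mul_a]

/-- For `t ≠ 0` the idempotent `t⁻¹ b` generates the right ideal `pA` and the left ideal `Aq`.
-/
lemma exists_sameRightIdeal_sameLeftIdeal {𝕜 : Type*} [Field 𝕜] [Algebra 𝕜 A]
    (h : IsEquivalencePair p q a b) {t : 𝕜} (hqp : q * p = t • a) (ht : t ≠ 0) :
    ∃ r : A, p * r = r ∧ r * p = p ∧ r * q = r ∧ q * r = q := by
  refine ⟨t⁻¹ • b, ?_, ?_, ?_, ?_⟩
  · rw [mul_smul_comm, h.p_mul_b]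
  · rw [smul_mul_assoc, ← h.b_mul_q, mul_assoc, hqp, mul_smul_comm, h.b_mul_a, smul_smul,
      inv_mul_cancel₀ ht, one_smul]
  · rw [smul_mul_assoc, h.b_mul_q]
  · rw [mul_smul_comm, ← h.p_mul_b, ← mul_assoc, hqp, smul_mul_assoc, h.a_mul_b, smul_smul,
      inv_mul_cancel₀ ht, one_smul]

variable [TopologicalSpace A] [IsTopologicalRing A] [Algebra ℝ A] [ContinuousSMul ℝ A]

/-- When `pq = qp = 0`, the idempotents `p + b` and `q + a` interpolate:
`pA = (p + b)A`, `A(p + b) = A(q + a)`, `(q + a)A = qA`. -/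
lemma isPrincipalConj_of_orthogonal (h : IsEquivalencePair p q a b) (hpq : p * q = 0)
    (hqp : q * p = 0) : IsPrincipalConj p q := by
  have hpp := h.mul_self_left
  have hqq := h.symm.mul_self_left
  have hbp : b * p = 0 := by rw [← h.b_mul_q, mul_assoc, hqp, mul_zero]
  have hqb : q * b = 0 := by rw [← h.p_mul_b, ← mul_assoc, hqp, zero_mul]
  have hpa : p * a = 0 := by rw [← h.q_mul_a, ← mul_assoc, hpq, zero_mul]
  have haq : a * q = 0 := by rw [← h.a_mul_p, mul_assoc, hpq, mul_zero]
  have step₁ : IsPrincipalConj p (p + b) :=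
    isPrincipalConj_of_sameRightIdeal (by rw [mul_add, hpp, h.p_mul_b])
      (by rw [add_mul, hpp, hbp, add_zero])
  have step₂ : IsPrincipalConj (p + b) (q + a) :=
    isPrincipalConj_of_sameLeftIdeal
      (by rw [add_mul, mul_add, mul_add, hqp, hqb, h.a_mul_p, h.a_mul_b]; abel)
      (by rw [add_mul, mul_add, mul_add, hpq, hpa, h.b_mul_q, h.b_mul_a]; abel)
  have step₃ : IsPrincipalConj q (q + a) :=
    isPrincipalConj_of_sameRightIdeal (by rw [mul_add, hqq, h.q_mul_a])
      (by rw [add_mul, hqq, haq, add_zero])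
  exact step₁.trans (step₂.trans step₃.symm)

lemma isPrincipalConj {𝕜 : Type*} [Field 𝕜] [Algebra 𝕜 A] (h : IsEquivalencePair p q a b)
    {s t : 𝕜} (hpq : p * q = s • b) (hqp : q * p = t • a) : IsPrincipalConj p q := by
  by_cases ht : t = 0
  · by_cases hs : s = 0
    · exact h.isPrincipalConj_of_orthogonal (by rw [hpq, hs, zero_smul])
        (by rw [hqp, ht, zero_smul])
    · obtain ⟨r, hqr, hrq, hrp, hpr⟩ := h.symm.exists_sameRightIdeal_sameLeftIdeal hpq hs
      exact ((isPrincipalConj_of_sameRightIdeal hqr hrq).trans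
        (isPrincipalConj_of_sameLeftIdeal hpr hrp)).symm
  · obtain ⟨r, hpr, hrp, hrq, hqr⟩ := h.exists_sameRightIdeal_sameLeftIdeal hqp ht
    exact (isPrincipalConj_of_sameRightIdeal hpr hrp).trans
      (isPrincipalConj_of_sameLeftIdeal hqr hrq)

end IsEquivalencePair

end EquivalencePair

section MinimalProjection

variable {A : Type*} [Ring A]

lemma exists_mul_mul_ne_zero_of_mem_idealGen {p q : A} (hq : IsIdempotentElem q) (hq0 : q ≠ 0)
    (hqJ : q ∈ idealGen p) : ∃ x y : A, q * x * p * y * q ≠ 0 := by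
  obtain ⟨n, x, y, hsum⟩ := hqJ
  by_contra! h
  apply hq0
  calc q = q * q * q := by rw [hq.eq, hq.eq]
    _ = ∑ i, q * x i * p * y i * q := by
        nth_rewrite 2 [hsum]
        simp only [Finset.mul_sum, Finset.sum_mul, mul_assoc]
    _ = 0 := Finset.sum_eq_zero fun i _ => h (x i) (y i)

variable [Algebra ℂ A]

lemma exists_isEquivalencePair {p q x y : A} (hp : IsMinimalProjection p)
    (hq : IsMinimalProjection q) (hxy : q * x * p * y * q ≠ 0) :
    ∃ a b : A, IsEquivalencePair p q a b := by
  obtain ⟨-, hpp, hpA⟩ := hp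
  obtain ⟨hq0, hqq, hqA⟩ := hq
  have hpp' (z : A) : p * (p * z) = p * z := by rw [← mul_assoc, hpp.eq]
  have hqq' (z : A) : q * (q * z) = q * z := by rw [← mul_assoc, hqq.eq]
  obtain ⟨c, hc⟩ := hqA (x * p * y)
  have hc' : q * x * p * y * q = c • q := by rw [← hc]; simp only [mul_assoc]
  have hc0 : c ≠ 0 := by rintro rfl; exact hxy (by rw [hc', zero_smul])
  set a := c⁻¹ • (q * x * p) with ha
  set b := p * y * q with hb
  have hqa : q * a = a := by simp only [ha, mul_assoc, mul_smul_comm, hqq']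
  have hap : a * p = a := by simp only [ha, mul_assoc, smul_mul_assoc, hpp.eq]
  have hpb : p * b = b := by simp only [hb, mul_assoc, hpp']
  have hbq : b * q = b := by simp only [hb, mul_assoc, hqq.eq]
  have hab : a * b = q := by
    have hxpb : q * x * p * b = q * x * p * y * q := by simp only [hb, mul_assoc, hpp']
    rw [smul_mul_assoc, hxpb, hc', smul_smul, inv_mul_cancel₀ hc0, one_smul]
  clear_value a b
  obtain ⟨d, hd⟩ := hpA (b * a)
  have hba : b * a = d • p := by rw [← hd, mul_assoc, mul_assoc, hap, ← mul_assoc, hpb]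
  have hd1 : d • q = (1 : ℂ) • q :=
    calc d • q = a * (d • p) * b := by rw [mul_smul_comm, smul_mul_assoc, hap, hab]
      _ = (a * b) * (a * b) := by rw [← hba]; simp only [mul_assoc]
      _ = (1 : ℂ) • q := by rw [hab, hqq.eq, one_smul]
  rw [smul_left_injective ℂ hq0 hd1, one_smul] at hba
  exact ⟨a, b, hqa, hap, hpb, hbq, hab, hba⟩

end MinimalProjection

lemma Units.bijOn_conj_leftIdeal {M : Type*} [Monoid M] (v : Mˣ) {p q : M}
    (hq : q = v * p * ↑v⁻¹) :
    Set.BijOn (fun x : M => v * x * ↑v⁻¹) {y | ∃ z, y = z * p} {y | ∃ z, y = z * q} := by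
  refine Set.InvOn.bijOn (f' := fun x => ↑v⁻¹ * x * v)
    ⟨fun x _ => by simp [mul_assoc], fun x _ => by simp [mul_assoc]⟩ ?_ ?_
  · rintro _ ⟨z, rfl⟩
    exact ⟨v * z * ↑v⁻¹, by simp [hq, mul_assoc]⟩
  · rintro _ ⟨z, rfl⟩
    exact ⟨↑v⁻¹ * z * v, by simp [hq, mul_assoc]⟩

theorem minimal_left_ideals_in_idealGen_isomorphic_general {A : Type*} [NormedRing A]
    [NormedAlgebra ℂ A]
    (p q : A) (hp : IsMinimalProjection p) (hq : IsMinimalProjection q)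
    (hqJ : q ∈ idealGen p) :
    ∃ v : Aˣ, v ∈ connectedComponent (1 : Aˣ) ∧ q = (v : A) * p * ((v⁻¹ : Aˣ) : A) ∧
      Continuous (fun x : A => (v : A) * x * ((v⁻¹ : Aˣ) : A)) ∧
      (∀ x y : A, (v : A) * (x * y) * ((v⁻¹ : Aˣ) : A) =
        ((v : A) * x * ((v⁻¹ : Aˣ) : A)) * ((v : A) * y * ((v⁻¹ : Aˣ) : A))) ∧
      Set.BijOn (fun x : A => (v : A) * x * ((v⁻¹ : Aˣ) : A))
        {y | ∃ z : A, y = z * p} {y | ∃ z : A, y = z * q} := by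
  obtain ⟨x, y, hxy⟩ := exists_mul_mul_ne_zero_of_mem_idealGen hq.2.1 hq.1 hqJ
  obtain ⟨a, b, hab⟩ := exists_isEquivalencePair hp hq hxy
  obtain ⟨t, hqp⟩ := hab.exists_mul_eq_smul hq.2.2
  obtain ⟨s, hpq⟩ := hab.symm.exists_mul_eq_smul hp.2.2
  obtain ⟨v, hv, hconj⟩ := hab.isPrincipalConj hpq hqp
  exact ⟨v, hv, hconj, by fun_prop, fun x y => by simp [mul_assoc],
    v.bijOn_conj_leftIdeal hconj⟩

/-- Any minimal left ideal `Aq` contained in `J_p` is isomorphic to `Ap` as a Banach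
algebra via `T_q (x p) = v (x p) v⁻¹` where `q = v p v⁻¹`, `v ∈ G₁(A)`. -/
theorem minimal_left_ideals_in_idealGen_isomorphic {A : Type*} [NormedRing A]
    [NormedAlgebra ℂ A] [CompleteSpace A]
    (hss : ∀ a : A, (∀ x : A, spectrum ℂ (a * x) ⊆ {0}) → a = 0)
    (p q : A) (hp : IsMinimalProjection p) (hq : IsMinimalProjection q)
    (hqJ : q ∈ idealGen p) :
    ∃ v : Aˣ, v ∈ connectedComponent (1 : Aˣ) ∧ q = (v : A) * p * ((v⁻¹ : Aˣ) : A) ∧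
      Continuous (fun x : A => (v : A) * x * ((v⁻¹ : Aˣ) : A)) ∧
      (∀ x y : A, (v : A) * (x * y) * ((v⁻¹ : Aˣ) : A) =
        ((v : A) * x * ((v⁻¹ : Aˣ) : A)) * ((v : A) * y * ((v⁻¹ : Aˣ) : A))) ∧
      Set.BijOn (fun x : A => (v : A) * x * ((v⁻¹ : Aˣ) : A))
        {y | ∃ z : A, y = z * p} {y | ∃ z : A, y = z * q} :=
  minimal_left_ideals_in_idealGen_isomorphic_general p q hp hq hqJ
end
end

section
/- Let A be a complex semisimple unital Banach algebra with nonzero socle, and suppose Soc(A) contains two orthogonal nonzero two-sided ideals J_p, J_q generated by rank one projections p, q with J_p J_q = J_q J_p = {0}. Then the set R₁ of rank one elements of A is not connected; in fact, J_p ∩ R₁ is a nonempty proper subset of R₁ that is both open and closed in R₁ (with the subspace topology from A). -/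
noncomputable section

/-- `rank a ≤ n`: for every `x`, the nonzero spectrum of `x * a` is finite with at most
`n` elements. -/
def rankLE {A : Type*} [NormedRing A] [NormedAlgebra ℂ A] (a : A) (n : ℕ) : Prop :=
  ∀ x : A, (spectrum ℂ (x * a) \ {0}).Finite ∧ (spectrum ℂ (x * a) \ {0}).ncard ≤ n

/-- `rank a = n`: the supremum over `x` of `#(σ(xa) \ {0})` equals `n` and is attained. -/
def hasRank {A : Type*} [NormedRing A] [NormedAlgebra ℂ A] (a : A) (n : ℕ) : Prop :=
  rankLE a n ∧ ∃ x : A, (spectrum ℂ (x * a) \ {0}).ncard = n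

set_option linter.unusedSectionVars false
set_option maxHeartbeats 800000

namespace RankOneNC

open scoped ENNReal NNReal
open Filter

variable {A : Type*} [NormedRing A] [NormedAlgebra ℂ A] [CompleteSpace A]

/-- two-sided corner inverse relative to idempotent `p` -/
def CInv (p v : A) : Prop := ∃ w, p * w * p = w ∧ v * w = p ∧ w * v = p

lemma isUnit_of_inv {x y : A} (h1 : x * y = 1) (h2 : y * x = 1) : IsUnit x :=
  ⟨⟨x, y, h1, h2⟩, rfl⟩

lemma isUnit_of_comm_isUnit {X Y : A} (h : X * Y = Y * X) (hu : IsUnit (X * Y)) : IsUnit X := by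
  obtain ⟨u, hu'⟩ := hu
  have hr : X * (Y * ↑u⁻¹) = 1 := by rw [← mul_assoc, ← hu', Units.mul_inv]
  have hl : (↑u⁻¹ * Y) * X = 1 := by rw [mul_assoc, ← h, ← hu', Units.inv_mul]
  have heq : Y * (↑u⁻¹ : A) = ↑u⁻¹ * Y := by
    calc Y * (↑u⁻¹ : A) = ((↑u⁻¹ * Y) * X) * (Y * ↑u⁻¹) := by rw [hl, one_mul]
    _ = (↑u⁻¹ * Y) * (X * (Y * ↑u⁻¹)) := by simp only [mul_assoc]
    _ = ↑u⁻¹ * Y := by rw [hr, mul_one]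
  exact ⟨⟨X, Y * ↑u⁻¹, hr, by rw [heq]; exact hl⟩, rfl⟩

lemma isUnit_smul_of_isUnit {μ : ℂ} (hμ : μ ≠ 0) {x : A} (h : IsUnit x) : IsUnit (μ • x) := by
  obtain ⟨u, rfl⟩ := h
  refine isUnit_of_inv (y := μ⁻¹ • (↑u⁻¹ : A)) ?_ ?_ <;>
    rw [smul_mul_smul_comm] <;>
    simp [hμ, mul_inv_cancel₀, inv_mul_cancel₀]

lemma isUnit_of_isUnit_smul {μ : ℂ} (hμ : μ ≠ 0) {x : A} (h : IsUnit (μ • x)) : IsUnit x := by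
  have := isUnit_smul_of_isUnit (inv_ne_zero hμ) h
  rwa [smul_smul, inv_mul_cancel₀ hμ, one_smul] at this

lemma mem_spec_iff {μ : ℂ} {a : A} : μ ∈ spectrum ℂ a ↔ ¬ IsUnit (μ • (1:A) - a) := by
  rw [spectrum.mem_iff, Algebra.algebraMap_eq_smul_one]

lemma spec_swap {a b : A} {μ : ℂ} (hμ : μ ≠ 0) (h : μ ∈ spectrum ℂ (a * b)) :
    μ ∈ spectrum ℂ (b * a) := by
  have : μ ∈ spectrum ℂ (a * b) \ {0} := ⟨h, by simpa using hμ⟩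
  rw [spectrum.nonzero_mul_comm] at this
  exact this.1

lemma spec_sq_zero {w : A} (h : w * w = 0) : spectrum ℂ w ⊆ {0} := by
  intro μ hμ
  by_contra h0
  have hμ0 : μ ≠ 0 := by simpa using h0
  rw [mem_spec_iff] at hμ
  apply hμ
  apply isUnit_of_inv (y := μ⁻¹ • (1:A) + (μ⁻¹ * μ⁻¹) • w) <;>
  · simp only [mul_add, add_mul, sub_mul, mul_sub, smul_mul_assoc, mul_smul_comm, one_mul,
      mul_one, smul_smul, h, smul_zero]
    match_scalars <;> field_simp <;> ring


section Corner

variable {p : A} (hp : p * p = p)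

include hp

lemma corner_left {v : A} (hv : p * v * p = v) : p * v = v := by
  conv_lhs => rw [← hv]
  rw [← mul_assoc, ← mul_assoc, hp]
  exact hv

lemma corner_right {v : A} (hv : p * v * p = v) : v * p = v := by
  conv_lhs => rw [← hv]
  rw [mul_assoc, mul_assoc, hp, ← mul_assoc]
  exact hv

lemma corner_mul {v w : A} (hv : p * v * p = v) (hw : p * w * p = w) :
    p * (v * w) * p = v * w := by
  have h1 : p * v = v := corner_left hp hv
  have h2 : w * p = w := corner_right hp hw
  calc p * (v * w) * p = (p * v) * (w * p) := by simp only [mul_assoc]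
  _ = v * w := by rw [h1, h2]

/-- `(*)`, direction 1: corner invertibility of `v - μ p` gives invertibility of `μ - v`. -/
lemma star1 {v : A} (hv : p * v * p = v) {μ : ℂ} (hμ : μ ≠ 0)
    (h : CInv p (v - μ • p)) : IsUnit (μ • (1:A) - v) := by
  obtain ⟨w, hw, h1, h2⟩ := h
  have hpw : p * w = w := corner_left hp hw
  have hwp : w * p = w := corner_right hp hw
  have hpv : p * v = v := corner_left hp hv
  have hvp : v * p = v := corner_right hp hv
  have hvw : v * w = p + μ • w := by
    have h3 : v * w - μ • w = p := by
      simpa [sub_mul, smul_mul_assoc, hpw] using h1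
    linear_combination (norm := module) h3
  have hwv : w * v = p + μ • w := by
    have h3 : w * v - μ • w = p := by
      simpa [mul_sub, mul_smul_comm, hwp] using h2
    linear_combination (norm := module) h3
  apply isUnit_of_inv (y := μ⁻¹ • ((1:A) - p) - w)
  · have expand : (μ • (1:A) - v) * (μ⁻¹ • ((1:A) - p) - w)
        = (μ * μ⁻¹) • ((1:A) - p) - μ • w - μ⁻¹ • (v - v * p) + v * w := by
      simp only [sub_mul, mul_sub, smul_mul_assoc, mul_smul_comm, one_mul, mul_one, smul_smul,
        smul_sub]
      module
    rw [expand, hvp, hvw, mul_inv_cancel₀ hμ]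
    module
  · have expand : (μ⁻¹ • ((1:A) - p) - w) * (μ • (1:A) - v)
        = (μ⁻¹ * μ) • ((1:A) - p) - μ • w - μ⁻¹ • (v - p * v) + w * v := by
      simp only [sub_mul, mul_sub, smul_mul_assoc, mul_smul_comm, one_mul, mul_one, smul_smul,
        smul_sub]
      module
    rw [expand, hpv, hwv, inv_mul_cancel₀ hμ]
    module

/-- `(*)`, direction 2. -/
lemma star2 {v : A} (hv : p * v * p = v) {μ : ℂ} (hμ : μ ≠ 0)
    (h : IsUnit (μ • (1:A) - v)) : CInv p (v - μ • p) := by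
  obtain ⟨u, hu⟩ := h
  set s : A := ↑u⁻¹ with hs
  have h1 : (μ • (1:A) - v) * s = 1 := by rw [hs, ← hu, Units.mul_inv]
  have h2 : s * (μ • (1:A) - v) = 1 := by rw [hs, ← hu, Units.inv_mul]
  have hpv : p * v = v := corner_left hp hv
  have hvp : v * p = v := corner_right hp hv
  have hcomm : (μ • (1:A) - v) * p = p * (μ • (1:A) - v) := by
    simp only [sub_mul, mul_sub, smul_mul_assoc, mul_smul_comm, one_mul, mul_one, hpv, hvp]
  have hsp : s * p = p * s := by
    calc s * p = s * (p * ((μ • (1:A) - v) * s)) := by rw [h1, mul_one]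
    _ = s * (p * (μ • (1:A) - v)) * s := by simp only [mul_assoc]
    _ = s * ((μ • (1:A) - v) * p) * s := by rw [hcomm]
    _ = (s * (μ • (1:A) - v)) * (p * s) := by simp only [mul_assoc]
    _ = p * s := by rw [h2, one_mul]
  have hpsp : p * s * p = p * s := by
    rw [mul_assoc, hsp, ← mul_assoc, hp]
  refine ⟨-(p * s * p), ?_, ?_, ?_⟩
  · simp only [mul_neg, neg_mul, neg_inj]
    calc p * (p * s * p) * p = (p * p) * s * (p * p) := by simp only [mul_assoc]
    _ = p * s * p := by rw [hp]
  · have hfac : v - μ • p = -((μ • (1:A) - v) * p) := by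
      simp only [sub_mul, smul_mul_assoc, one_mul, hvp, neg_sub]
    rw [hfac, hpsp, neg_mul_neg]
    calc ((μ • (1:A) - v) * p) * (p * s) = (μ • (1:A) - v) * ((p * p) * s) := by
          simp only [mul_assoc]
    _ = (μ • (1:A) - v) * (p * s) := by rw [hp]
    _ = ((μ • (1:A) - v) * p) * s := by rw [mul_assoc]
    _ = (p * (μ • (1:A) - v)) * s := by rw [hcomm]
    _ = p * ((μ • (1:A) - v) * s) := by rw [mul_assoc]
    _ = p := by rw [h1, mul_one]
  · have hfac : v - μ • p = -(p * (μ • (1:A) - v)) := by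
      simp only [mul_sub, mul_smul_comm, mul_one, hpv, neg_sub]
    rw [hfac, hpsp, neg_mul_neg]
    calc (p * s) * (p * (μ • (1:A) - v)) = p * ((s * p) * (μ • (1:A) - v)) := by
          simp only [mul_assoc]
    _ = p * ((p * s) * (μ • (1:A) - v)) := by rw [hsp]
    _ = (p * p) * (s * (μ • (1:A) - v)) := by simp only [mul_assoc]
    _ = p := by rw [h2, hp, mul_one]

end Corner
section Corner2

variable {p : A} (hp : p * p = p)

include hp

/-- Jacobson's lemma inside the corner. -/
lemma cjac {x y : A} (hx : p * x * p = x) (hy : p * y * p = y) {μ : ℂ} (hμ : μ ≠ 0)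
    (h : CInv p (x * y - μ • p)) : CInv p (y * x - μ • p) := by
  obtain ⟨z, hzc, hz1, hz2⟩ := h
  have hpz : p * z = z := corner_left hp hzc
  have hzp : z * p = z := corner_right hp hzc
  have hyp : y * p = y := corner_right hp hy
  have hxp : x * p = x := corner_right hp hx
  have hxyz : x * (y * z) = p + μ • z := by
    have h3 : x * (y * z) - μ • z = p := by
      simpa [sub_mul, smul_mul_assoc, hpz, mul_assoc] using hz1
    linear_combination (norm := module) h3
  have hzxy : z * (x * y) = p + μ • z := by
    have h3 : z * (x * y) - μ • z = p := by
      simpa [mul_sub, mul_smul_comm, hzp] using hz2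
    linear_combination (norm := module) h3
  have hyzx : p * (y * z * x) * p = y * z * x :=
    corner_mul hp (corner_mul hp hy hzc) hx
  have key1 : (y * x) * (y * z * x) = y * x + μ • (y * z * x) := by
    calc (y * x) * (y * z * x) = y * (x * (y * z)) * x := by simp only [mul_assoc]
    _ = y * (p + μ • z) * x := by rw [hxyz]
    _ = y * x + μ • (y * z * x) := by
        simp only [mul_add, add_mul, mul_smul_comm, smul_mul_assoc, hyp]
  have key2 : (y * z * x) * (y * x) = y * x + μ • (y * z * x) := by
    calc (y * z * x) * (y * x) = y * (z * (x * y)) * x := by simp only [mul_assoc]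
    _ = y * (p + μ • z) * x := by rw [hzxy]
    _ = y * x + μ • (y * z * x) := by
        simp only [mul_add, add_mul, mul_smul_comm, smul_mul_assoc, hyp]
  have hpy : p * y = y := corner_left hp hy
  have e1 : (y * x) * p = y * x := by rw [mul_assoc, hxp]
  have e4 : p * (y * x) = y * x := by rw [← mul_assoc, hpy]
  have e2 : p * (y * z * x) = y * z * x := corner_left hp hyzx
  have e3 : (y * z * x) * p = y * z * x := corner_right hp hyzx
  refine ⟨μ⁻¹ • (y * z * x - p), ?_, ?_, ?_⟩
  · simp only [mul_smul_comm, smul_mul_assoc, mul_sub, sub_mul]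
    rw [hyzx, hp]
    rw [hp]
  · simp only [mul_sub, sub_mul, smul_mul_assoc, mul_smul_comm, smul_smul, smul_sub]
    rw [key1, e1, e2, hp]
    match_scalars <;> field_simp <;> ring
  · simp only [mul_sub, sub_mul, smul_mul_assoc, mul_smul_comm, smul_smul, smul_sub]
    rw [key2, e3, e4, hp]
    match_scalars <;> field_simp <;> ring

/-- the "corner spectrum" has at most one element. -/
lemma lam_subsingleton (hr : rankLE p 1) {v : A} (hv : p * v * p = v) {μ₁ μ₂ : ℂ}
    (h1 : ¬ CInv p (v - μ₁ • p)) (h2 : ¬ CInv p (v - μ₂ • p)) : μ₁ = μ₂ := by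
  by_contra hne
  set R : ℝ := ‖v‖ * ‖(1 : A)‖ + ‖μ₁‖ + ‖μ₂‖ + 1 with hR
  set μ₀ : ℂ := (R : ℂ) with hμ₀
  have hnR : ‖μ₀‖ = R := by
    rw [hμ₀, Complex.norm_real, Real.norm_eq_abs, abs_of_nonneg (by rw [hR]; positivity)]
  have hmem : ∀ μ : ℂ, ¬ CInv p (v - μ • p) → ‖μ‖ ≤ ‖v‖ * ‖(1:A)‖ + ‖μ₁‖ + ‖μ₂‖ →
      (μ - μ₀) ∈ spectrum ℂ ((v - μ₀ • (1:A)) * p) \ {0} := by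
    intro μ hcin hle
    have hne0 : μ - μ₀ ≠ 0 := by
      intro hz
      rw [sub_eq_zero] at hz
      rw [hz, hnR] at hle
      rw [hR] at hle; linarith
    have hv' : p * (v - μ₀ • p) * p = v - μ₀ • p := by
      simp only [mul_sub, sub_mul, mul_smul_comm, smul_mul_assoc, hv]
      rw [hp, hp]
    have hrw : (v - μ₀ • p) - (μ - μ₀) • p = v - μ • p := by module
    have : ¬ IsUnit ((μ - μ₀) • (1:A) - (v - μ₀ • p)) := by
      intro hu
      exact hcin (by rw [← hrw]; exact star2 hp hv' hne0 hu)
    have hmem' : (μ - μ₀) ∈ spectrum ℂ (v - μ₀ • p) := mem_spec_iff.mpr this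
    have hfac : v - μ₀ • p = (v - μ₀ • (1:A)) * p := by
      simp only [sub_mul, smul_mul_assoc, one_mul, corner_right hp hv]
    rw [← hfac]
    exact ⟨hmem', by simpa using hne0⟩
  have hs := hr (v - μ₀ • (1:A))
  have hb : (0:ℝ) ≤ ‖v‖ * ‖(1:A)‖ :=
    mul_nonneg (norm_nonneg v) (norm_nonneg (1:A))
  have m1 := hmem μ₁ h1 (by linarith [norm_nonneg μ₂])
  have m2 := hmem μ₂ h2 (by linarith [norm_nonneg μ₁])
  have hdist : μ₁ - μ₀ ≠ μ₂ - μ₀ := by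
    intro hcon
    exact hne (by have := congrArg (· + μ₀) hcon; simpa using this)
  have hlt : 1 < (spectrum ℂ ((v - μ₀ • (1:A)) * p) \ {0}).ncard := by
    rw [Set.one_lt_ncard hs.1]
    exact ⟨_, m1, _, m2, hdist⟩
  have := hs.2
  omega

/-- the corner spectrum is nonempty. -/
lemma lam_exists (hp0 : p ≠ 0) {v : A} (hv : p * v * p = v) :
    ∃ τ : ℂ, ¬ CInv p (v - τ • p) := by
  by_contra hcon
  push_neg at hcon
  -- v is quasinilpotent
  have hqn : spectrum ℂ v ⊆ {0} := by
    intro μ hμ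
    by_contra h0
    have hμ0 : μ ≠ 0 := by simpa using h0
    exact mem_spec_iff.mp hμ (star1 hp hv hμ0 (by simpa using hcon μ))
  obtain ⟨w, hwc, hw1, hw2⟩ : CInv p v := by simpa using hcon 0
  have hvp : v * p = v := corner_right hp hv
  have hpow : ∀ n : ℕ, v ^ (n + 1) * w ^ (n + 1) = p := by
    intro n
    induction n with
    | zero => simpa using hw1
    | succ n ih =>
      have hwp : p * w = w := corner_left hp hwc
      calc v ^ (n + 2) * w ^ (n + 2) = v * (v ^ (n + 1) * w ^ (n + 1)) * w := by
            rw [pow_succ' v, pow_succ w]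
            simp only [mul_assoc]
      _ = v * p * w := by rw [ih]
      _ = p := by rw [mul_assoc, hwp, hw1]
  -- spectral radius zero
  have hrad : spectralRadius ℂ v = 0 := by
    refine le_antisymm ?_ zero_le
    refine iSup₂_le fun k hk => ?_
    have : k = 0 := hqn hk
    simp [this]
  have hlim := spectrum.pow_nnnorm_pow_one_div_tendsto_nhds_spectralRadius v
  rw [hrad] at hlim
  -- extract smallness
  have hp0' : (0:ℝ) < ‖p‖ := norm_pos_iff.mpr hp0
  set c : NNReal := (2 * (‖w‖₊ + 1))⁻¹ with hc
  have hwn1 : (‖w‖₊ + 1 : ℝ≥0) ≠ 0 := by positivity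
  have hcpos : (0:ℝ≥0∞) < (c : ℝ≥0∞) := by
    rw [hc]
    simp only [ENNReal.coe_pos]
    positivity
  have hev := hlim.eventually_lt_const hcpos
  have hsmall : ∀ᶠ n : ℕ in Filter.atTop, ‖p‖₊ ≤ ((2:ℝ≥0)⁻¹) ^ n := by
    filter_upwards [hev, Filter.eventually_ge_atTop 1] with n hn hn1
    have hn0 : 0 < n := hn1
    have hvn : (‖v ^ n‖₊ : ℝ≥0∞) < (c : ℝ≥0∞) ^ (n : ℝ) := by
      have h1 : ((‖v ^ n‖₊ : ℝ≥0∞) ^ ((1:ℝ)/n)) ^ (n:ℝ) < (c : ℝ≥0∞) ^ (n:ℝ) := by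
        apply ENNReal.rpow_lt_rpow hn
        exact_mod_cast hn0
      rwa [← ENNReal.rpow_mul, one_div,
        inv_mul_cancel₀ (by exact_mod_cast hn0.ne' : (n:ℝ) ≠ 0), ENNReal.rpow_one] at h1
    have hvn' : ‖v ^ n‖₊ < c ^ n := by
      rw [← ENNReal.coe_rpow_of_nonneg _ (by positivity : (0:ℝ) ≤ (n:ℝ)),
        ENNReal.coe_lt_coe, NNReal.rpow_natCast] at hvn
      exact hvn
    obtain ⟨m, rfl⟩ : ∃ m, n = m + 1 := ⟨n - 1, by omega⟩
    have hpvw : p = v ^ (m+1) * w ^ (m+1) := (hpow m).symm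
    calc ‖p‖₊ = ‖v ^ (m+1) * w ^ (m+1)‖₊ := by rw [← hpvw]
    _ ≤ ‖v ^ (m+1)‖₊ * ‖w ^ (m+1)‖₊ := nnnorm_mul_le _ _
    _ ≤ c ^ (m+1) * (‖w‖₊ + 1) ^ (m+1) := by
        refine mul_le_mul hvn'.le ?_ zero_le zero_le
        calc ‖w ^ (m+1)‖₊ ≤ ‖w‖₊ ^ (m+1) := nnnorm_pow_le' w (Nat.succ_pos m)
        _ ≤ (‖w‖₊ + 1) ^ (m+1) := pow_le_pow_left₀ zero_le (le_self_add) _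
    _ = (c * (‖w‖₊ + 1)) ^ (m+1) := (mul_pow _ _ _).symm
    _ = ((2:ℝ≥0)⁻¹) ^ (m+1) := by
        rw [hc, mul_inv, mul_assoc, inv_mul_cancel₀ hwn1, mul_one]
  have hsmall' : ∀ᶠ n : ℕ in Filter.atTop, ‖p‖ ≤ ((2:ℝ)⁻¹) ^ n := by
    filter_upwards [hsmall] with n h
    have := NNReal.coe_le_coe.mpr h
    push_cast at this
    simpa using this
  have ht : Filter.Tendsto (fun n : ℕ => ((2:ℝ)⁻¹) ^ n) Filter.atTop (nhds 0) :=
    tendsto_pow_atTop_nhds_zero_of_lt_one (by norm_num) (by norm_num)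
  have hfin : ‖p‖ ≤ 0 := ge_of_tendsto ht hsmall'
  linarith

end Corner2

section Corner3

variable {p : A} (hp : p * p = p)

include hp

/-- quasinilpotents in the corner absorb multiplication. -/
lemma absorption (hp0 : p ≠ 0) (hr : rankLE p 1)
    {d e : A} (hd : p * d * p = d) (he : p * e * p = e)
    (hd0 : ¬ CInv p d) {μ : ℂ} (hμ : μ ≠ 0) : CInv p (e * d - μ • p) := by
  by_contra hcon
  have hed : p * (e * d) * p = e * d := corner_mul hp he hd
  have hcinv : CInv p (e * d) := by
    by_contra h0
    have h0' : ¬ CInv p ((e * d) - (0:ℂ) • p) := by simpa using h0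
    exact hμ (lam_subsingleton hp hr hed h0' hcon).symm
  obtain ⟨s, hsc, hs1, hs2⟩ := hcinv
  set k := s * e with hk
  have hkc : p * k * p = k := corner_mul hp hsc he
  have hkd : k * d = p := by rw [hk, mul_assoc, hs2]
  set w := d * k with hw
  have hwc : p * w * p = w := corner_mul hp hd hkc
  have hne1 : ¬ CInv p (k * d - (1:ℂ) • p) := by
    rw [hkd]
    rintro ⟨w', hw'c, hw'1, hw'2⟩
    apply hp0
    have hz : p - (1:ℂ) • p = 0 := by module
    rw [hz, zero_mul] at hw'1
    exact hw'1.symm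
  have hnw1 : ¬ CInv p (w - (1:ℂ) • p) := fun hcw => hne1 (cjac hp hd hkc one_ne_zero hcw)
  have hw0 : CInv p w := by
    by_contra h0
    have h0' : ¬ CInv p (w - (0:ℂ) • p) := by simpa using h0
    exact one_ne_zero (lam_subsingleton hp hr hwc hnw1 h0')
  obtain ⟨w', hw'c, hw'1, hw'2⟩ := hw0
  have hidem : w * w = w := by
    rw [hw]
    calc d * k * (d * k) = d * (k * d) * k := by simp only [mul_assoc]
    _ = d * p * k := by rw [hkd]
    _ = d * k := by rw [corner_right hp hd]
  have hwp : w = p := by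
    calc w = p * w := (corner_left hp hwc).symm
    _ = (w' * w) * w := by rw [hw'2]
    _ = w' * (w * w) := by rw [mul_assoc]
    _ = w' * w := by rw [hidem]
    _ = p := hw'2
  exact hd0 ⟨k, hkc, by rw [← hw, hwp], hkd⟩

/-- The corner lemma: the corner of a rank-one idempotent is one dimensional. -/
lemma corner_scalar (hp0 : p ≠ 0) (hr : rankLE p 1)
    (hss : ∀ a : A, (∀ x : A, spectrum ℂ (a * x) ⊆ {0}) → a = 0)
    (z : A) : ∃ t : ℂ, p * z * p = t • p := by
  set v := p * z * p with hv
  have hvc : p * v * p = v := by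
    have h1 : p * (p * z * p) * p = (p * p) * z * (p * p) := by simp only [mul_assoc]
    rw [hv, h1, hp]
  obtain ⟨τ, hτ⟩ := lam_exists hp hp0 hvc
  set d := v - τ • p with hd
  have hdc : p * d * p = d := by
    rw [hd]
    simp only [mul_sub, sub_mul, mul_smul_comm, smul_mul_assoc, hvc]
    rw [hp, hp]
  have hd0 : ¬ CInv p d := hτ
  have hzero : d = 0 := by
    apply hss
    intro x μ hμmem
    by_contra h0ne
    have hμ0 : μ ≠ 0 := by simpa using h0ne
    have hdp : d * p = d := corner_right hp hdc
    have hpd : p * d = d := corner_left hp hdc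
    have h1 : μ ∈ spectrum ℂ ((p * x) * d) := by
      apply spec_swap hμ0
      have h2 : d * (p * x) = d * x := by rw [← mul_assoc, hdp]
      rw [h2]
      exact hμmem
    have h2 : (p * x) * d = (p * x * p) * d := by
      rw [mul_assoc (p * x), hpd]
    have hec : p * (p * x * p) * p = p * x * p := by
      have h3 : p * (p * x * p) * p = (p * p) * x * (p * p) := by simp only [mul_assoc]
      rw [h3, hp]
    have habs := absorption hp hp0 hr hdc hec hd0 hμ0
    have hu := star1 hp (corner_mul hp hec hdc) hμ0 habs
    rw [h2] at h1
    exact (mem_spec_iff.mp h1) hu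
  refine ⟨τ, ?_⟩
  show v = τ • p
  rw [hd] at hzero
  exact sub_eq_zero.mp hzero

end Corner3

section Basics

lemma mem_idealGen_single (p x y : A) : x * p * y ∈ idealGen p :=
  ⟨1, fun _ => x, fun _ => y, by rw [Fin.sum_univ_one]⟩

lemma hasRank_one_witness {b : A} (h : hasRank b 1) :
    ∃ u lam, lam ≠ 0 ∧ lam ∈ spectrum ℂ (u * b) := by
  obtain ⟨-, x, hx⟩ := h
  obtain ⟨lam, hlam⟩ := Set.ncard_eq_one.mp hx
  have hmem : lam ∈ spectrum ℂ (x * b) \ {0} := by rw [hlam]; exact rfl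
  exact ⟨x, lam, by simpa using hmem.2, hmem.1⟩

lemma hasRank_one_ne_zero {b : A} (h : hasRank b 1) : b ≠ 0 := by
  obtain ⟨u, lam, h0, hm⟩ := hasRank_one_witness h
  intro hb0
  rw [hb0, mul_zero, mem_spec_iff, sub_zero] at hm
  exact hm (isUnit_smul_of_isUnit h0 isUnit_one)

lemma exists_spec_mul_right (hss : ∀ a : A, (∀ x : A, spectrum ℂ (a * x) ⊆ {0}) → a = 0)
    {c : A} (hc : c ≠ 0) : ∃ y lam, lam ≠ 0 ∧ lam ∈ spectrum ℂ (y * c) := by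
  by_contra hcon
  push_neg at hcon
  apply hc
  apply hss
  intro x μ hμ
  by_contra h0
  have hμ0 : μ ≠ 0 := by simpa using h0
  exact hcon x μ hμ0 (spec_swap hμ0 hμ)

lemma tp_sym (hss : ∀ a : A, (∀ x : A, spectrum ℂ (a * x) ⊆ {0}) → a = 0)
    {p b : A} (hb : ∀ x, p * x * b = 0) : ∀ x, b * x * p = 0 := by
  intro x
  have hcyc : ∀ y, (b * x * p) * y * (b * x * p) = 0 := by
    intro y
    calc (b * x * p) * y * (b * x * p) = b * (x * ((p * y * b) * (x * p))) := by
          simp only [mul_assoc]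
    _ = 0 := by rw [hb y, zero_mul, mul_zero, mul_zero]
  apply hss
  intro z
  apply spec_sq_zero
  calc ((b * x * p) * z) * ((b * x * p) * z) = ((b * x * p) * z * (b * x * p)) * z := by
        simp only [mul_assoc]
  _ = 0 := by rw [hcyc z, zero_mul]

lemma jp_ann {p a b : A} (ha : a ∈ idealGen p) (hb : ∀ x, p * x * b = 0) :
    ∀ z, a * z * b = 0 := by
  obtain ⟨n, xs, ys, rfl⟩ := ha
  intro z
  rw [Finset.sum_mul, Finset.sum_mul]
  apply Finset.sum_eq_zero
  intro i _
  calc xs i * p * ys i * z * b = xs i * ((p * (ys i * z) * b)) := by simp only [mul_assoc]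
  _ = 0 := by rw [hb (ys i * z), mul_zero]

lemma ann_jp (hss : ∀ a : A, (∀ x : A, spectrum ℂ (a * x) ⊆ {0}) → a = 0)
    {p a b : A} (ha : a ∈ idealGen p) (hb : ∀ x, p * x * b = 0) :
    ∀ z, b * z * a = 0 := by
  have hb' := tp_sym hss hb
  obtain ⟨n, xs, ys, rfl⟩ := ha
  intro z
  rw [Finset.mul_sum]
  apply Finset.sum_eq_zero
  intro i _
  calc b * z * (xs i * p * ys i) = (b * (z * xs i) * p) * ys i := by simp only [mul_assoc]
  _ = 0 := by rw [hb' (z * xs i), zero_mul]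

lemma orth_mem {Y W : A} (h1 : Y * W = 0) (h2 : W * Y = 0) {μ : ℂ} (hμ : μ ≠ 0)
    (hY : μ ∈ spectrum ℂ Y) : μ ∈ spectrum ℂ (Y + W) := by
  rw [mem_spec_iff] at hY ⊢
  intro hu
  apply hY
  have hid : (μ • (1:A) - Y) * (μ • (1:A) - W) = μ • (μ • (1:A) - (Y + W)) := by
    simp only [sub_mul, mul_sub, smul_mul_assoc, mul_smul_comm, one_mul, mul_one, h1]
    module
  have hid2 : (μ • (1:A) - W) * (μ • (1:A) - Y) = μ • (μ • (1:A) - (Y + W)) := by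
    simp only [sub_mul, mul_sub, smul_mul_assoc, mul_smul_comm, one_mul, mul_one, h2]
    module
  have hu2 : IsUnit ((μ • (1:A) - Y) * (μ • (1:A) - W)) := by
    rw [hid]; exact isUnit_smul_of_isUnit hμ hu
  exact isUnit_of_comm_isUnit (by rw [hid, hid2]) hu2

lemma sep {a b u : A} (h1 : ∀ z, a * z * b = 0) (h2 : ∀ z, b * z * a = 0)
    {lam : ℂ} (hl : lam ≠ 0) (hm : lam ∈ spectrum ℂ (u * a)) :
    ‖lam‖ ≤ (‖u‖ * ‖a - b‖) * ‖(1:A)‖ := by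
  have hY : (u * a) * (-(u * b)) = 0 := by
    rw [mul_neg, neg_eq_zero]
    calc (u * a) * (u * b) = u * (a * u * b) := by simp only [mul_assoc]
    _ = 0 := by rw [h1 u, mul_zero]
  have hW : (-(u * b)) * (u * a) = 0 := by
    rw [neg_mul, neg_eq_zero]
    calc (u * b) * (u * a) = u * (b * u * a) := by simp only [mul_assoc]
    _ = 0 := by rw [h2 u, mul_zero]
  have hmem : lam ∈ spectrum ℂ (u * a + -(u * b)) := orth_mem hY hW hl hm
  have heq : u * a + -(u * b) = u * (a - b) := by rw [mul_sub, ← sub_eq_add_neg]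
  rw [heq] at hmem
  calc ‖lam‖ ≤ ‖u * (a - b)‖ * ‖(1:A)‖ := spectrum.norm_le_norm_mul_of_mem hmem
  _ ≤ (‖u‖ * ‖a - b‖) * ‖(1:A)‖ :=
    mul_le_mul_of_nonneg_right (norm_mul_le u (a - b)) (norm_nonneg (1:A))

end Basics

section Dichotomy

/-- Key dichotomy: a rank one element not annihilated by `pA·` lies in `idealGen p`. -/
lemma dichotomy {p b : A} (hp : p * p = p) (hp0 : p ≠ 0) (hrp : rankLE p 1)
    (hss : ∀ a : A, (∀ x : A, spectrum ℂ (a * x) ⊆ {0}) → a = 0)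
    (hb : hasRank b 1) {x : A} (hx : p * x * b ≠ 0) : b ∈ idealGen p := by
  obtain ⟨y, lam, hl0, hlc⟩ := exists_spec_mul_right hss hx
  obtain ⟨t, ht⟩ := corner_scalar hp hp0 hrp hss (x * b * y)
  set c : A := p * x * b with hc
  set w : A := y * c with hwdef
  have hww : w * w = t • w := by
    have h1 : c * y * c = t • c := by
      calc c * y * c = (p * (x * b * y) * p) * (x * b) := by rw [hc]; simp only [mul_assoc]
      _ = (t • p) * (x * b) := by rw [ht]
      _ = t • c := by rw [hc]; simp only [smul_mul_assoc, mul_assoc]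
    calc w * w = y * (c * y * c) := by rw [hwdef]; simp only [mul_assoc]
    _ = t • w := by rw [h1, hwdef]; simp only [mul_smul_comm]
  have htl : t = lam := by
    by_contra hne
    have hlw := hlc
    rw [mem_spec_iff] at hlw
    apply hlw
    have hltd : lam - t ≠ 0 := sub_ne_zero.mpr (Ne.symm hne)
    have hlt : lam * (lam - t) ≠ 0 := mul_ne_zero hl0 hltd
    have hidl : (lam • (1:A) - w) * (w + (lam - t) • (1:A)) = (lam * (lam - t)) • (1:A) := by
      have e : (lam • (1:A) - w) * (w + (lam - t) • (1:A))
          = lam • w + (lam * (lam - t)) • (1:A) - w * w - (lam - t) • w := by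
        simp only [sub_mul, mul_add, smul_mul_assoc, mul_smul_comm, one_mul, mul_one, smul_smul]
        module
      rw [e, hww]
      module
    have hidr : (w + (lam - t) • (1:A)) * (lam • (1:A) - w) = (lam * (lam - t)) • (1:A) := by
      have e : (w + (lam - t) • (1:A)) * (lam • (1:A) - w)
          = lam • w + (lam * (lam - t)) • (1:A) - w * w - (lam - t) • w := by
        simp only [sub_mul, add_mul, mul_sub, smul_mul_assoc, mul_smul_comm, one_mul, mul_one,
          smul_smul]
        module
      rw [e, hww]
      module
    exact isUnit_of_comm_isUnit (by rw [hidl, hidr])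
      (by rw [hidl]; exact isUnit_smul_of_isUnit hlt isUnit_one)
  rw [htl] at ht hww
  set g : A := lam⁻¹ • (y * (p * x)) with hg
  have hgb : g * b = lam⁻¹ • w := by
    rw [hg, hwdef, hc]; simp only [smul_mul_assoc, mul_assoc]
  set β : A := b * g with hβ
  have hββ : β * β = β := by
    rw [hβ]
    have expand : (b * g) * (b * g)
        = (lam⁻¹ * lam⁻¹) • (b * (y * ((p * (x * b * y) * p) * x))) := by
      rw [hg]; simp only [smul_mul_assoc, mul_smul_comm, smul_smul, mul_assoc]
    rw [expand, ht, hg]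
    simp only [smul_mul_assoc, mul_smul_comm, smul_smul, mul_assoc]
    match_scalars
    field_simp
  set m : A := b - b * g * b with hm
  have hmg : m * g = 0 := by
    rw [hm, sub_mul]
    have h2 : b * g * b * g = β * β := by rw [hβ]; simp only [mul_assoc]
    rw [h2, hββ, hβ, sub_self]
  have hff : (g * b) * (g * b) = g * b := by
    rw [hgb, smul_mul_smul_comm, hww]
    match_scalars
    field_simp
  have hfspec : (1:ℂ) ∈ spectrum ℂ (g * b) := by
    rw [hgb, mem_spec_iff]
    intro hu
    have hlw := hlc
    rw [mem_spec_iff] at hlw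
    apply hlw
    have hconv : (1:ℂ) • (1:A) - lam⁻¹ • w = lam⁻¹ • (lam • (1:A) - w) := by
      match_scalars <;> field_simp
    rw [hconv] at hu
    exact isUnit_of_isUnit_smul (inv_ne_zero hl0) hu
  have hf0 : g * b ≠ 0 := by
    intro h0
    rw [h0, mem_spec_iff, sub_zero] at hfspec
    exact hfspec (isUnit_smul_of_isUnit one_ne_zero isUnit_one)
  have hm0 : m = 0 := by
    apply hss
    intro z ν hν
    by_contra hne0
    have hν0 : ν ≠ 0 := by simpa using hne0
    have hzm : ν ∈ spectrum ℂ (z * m) := spec_swap hν0 hν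
    have huf : (z * m) * (g * b) = 0 := by
      calc (z * m) * (g * b) = z * ((m * g) * b) := by simp only [mul_assoc]
      _ = 0 := by rw [hmg, zero_mul, mul_zero]
    set s : ℂ := ((‖z * m‖ * ‖(1:A)‖ + ‖ν‖ + 1 : ℝ) : ℂ) with hs
    have hsnorm : ‖s‖ = ‖z * m‖ * ‖(1:A)‖ + ‖ν‖ + 1 := by
      rw [hs, Complex.norm_real, Real.norm_eq_abs,
        abs_of_nonneg (by positivity)]
    have hbpos : (0:ℝ) ≤ ‖z * m‖ * ‖(1:A)‖ := by positivity
    have hs0 : s ≠ 0 := by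
      intro h0
      rw [h0, norm_zero] at hsnorm
      have := norm_nonneg ν
      linarith
    have hsν : s ≠ ν := by
      intro h0
      rw [h0] at hsnorm
      linarith
    have hsu : IsUnit (s • (1:A) - z * m) := by
      by_contra hnu
      have hmem : s ∈ spectrum ℂ (z * m) := mem_spec_iff.mpr hnu
      have hle := spectrum.norm_le_norm_mul_of_mem hmem
      rw [hsnorm] at hle
      have := norm_nonneg ν
      linarith
    have hνs : ν - s ≠ 0 := sub_ne_zero.mpr (fun h => hsν h.symm)
    have hν2 : ν ∈ spectrum ℂ (z * m + s • (g * b)) := by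
      rw [mem_spec_iff]
      intro hu
      have hidl : (ν • (1:A) - s • (g * b)) * ((ν - s) • (1:A) + s • (g * b))
          = (ν * (ν - s)) • (1:A) := by
        have e : (ν • (1:A) - s • (g * b)) * ((ν - s) • (1:A) + s • (g * b))
            = (ν * (ν - s)) • (1:A) + (ν * s) • (g * b) - (s * (ν - s)) • (g * b)
              - (s * s) • ((g * b) * (g * b)) := by
          simp only [sub_mul, add_mul, mul_add, mul_sub, smul_mul_assoc, mul_smul_comm, one_mul,
            mul_one, smul_smul]
          module
        rw [e, hff]
        module
      have hidr : ((ν - s) • (1:A) + s • (g * b)) * (ν • (1:A) - s • (g * b))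
          = (ν * (ν - s)) • (1:A) := by
        have e : ((ν - s) • (1:A) + s • (g * b)) * (ν • (1:A) - s • (g * b))
            = (ν * (ν - s)) • (1:A) + (ν * s) • (g * b) - (s * (ν - s)) • (g * b)
              - (s * s) • ((g * b) * (g * b)) := by
          simp only [sub_mul, add_mul, mul_add, mul_sub, smul_mul_assoc, mul_smul_comm, one_mul,
            mul_one, smul_smul]
          module
        rw [e, hff]
        module
      have hYinv : IsUnit (ν • (1:A) - s • (g * b)) :=
        isUnit_of_comm_isUnit (by rw [hidl, hidr])
          (by rw [hidl]; exact isUnit_smul_of_isUnit (mul_ne_zero hν0 hνs) isUnit_one)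
      have hprod : (ν • (1:A) - z * m) * (ν • (1:A) - s • (g * b))
          = ν • (ν • (1:A) - (z * m + s • (g * b))) := by
        simp only [mul_sub, sub_mul, smul_mul_assoc, mul_smul_comm, one_mul, mul_one, smul_smul,
          huf, smul_zero, sub_zero]
        module
      obtain ⟨uy, huy⟩ := hYinv
      have hXeq : (ν • (1:A) - z * m)
          = (ν • (ν • (1:A) - (z * m + s • (g * b)))) * ↑uy⁻¹ := by
        rw [← hprod, mul_assoc, ← huy, Units.mul_inv, mul_one]
      have hXu : IsUnit (ν • (1:A) - z * m) := by
        rw [hXeq]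
        exact (isUnit_smul_of_isUnit hν0 hu).mul (uy⁻¹.isUnit)
      exact (mem_spec_iff.mp hzm) hXu
    have hs2 : s ∈ spectrum ℂ (z * m + s • (g * b)) := by
      rw [mem_spec_iff]
      intro hu
      have hfac : s • (1:A) - (z * m + s • (g * b))
          = -((z * m - s • (1:A)) * ((1:A) - g * b)) := by
        simp only [mul_sub, sub_mul, smul_mul_assoc, mul_smul_comm, one_mul, mul_one,
          huf, smul_zero, sub_zero]
        module
      rw [hfac, IsUnit.neg_iff] at hu
      have hXu : IsUnit (z * m - s • (1:A)) := by
        have hrw : z * m - s • (1:A) = -(s • (1:A) - z * m) := by rw [neg_sub]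
        rw [hrw]; exact hsu.neg
      obtain ⟨ux, hux⟩ := hXu
      have h1f : IsUnit ((1:A) - g * b) := by
        have hrw : (1:A) - g * b = ↑ux⁻¹ * ((z * m - s • (1:A)) * ((1:A) - g * b)) := by
          rw [← mul_assoc, ← hux, Units.inv_mul, one_mul]
        rw [hrw]
        exact (ux⁻¹.isUnit).mul hu
      obtain ⟨uf, hufu⟩ := h1f
      apply hf0
      have hff0 : (g * b) * ((1:A) - g * b) = 0 := by rw [mul_sub, mul_one, hff, sub_self]
      calc g * b = (g * b) * (((1:A) - g * b) * ↑uf⁻¹) := by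
            rw [← hufu, Units.mul_inv, mul_one]
      _ = ((g * b) * ((1:A) - g * b)) * ↑uf⁻¹ := by simp only [mul_assoc]
      _ = 0 := by rw [hff0, zero_mul]
    have hform : z * m + s • (g * b) = ((z - z * β) + s • g) * b := by
      rw [hm, hβ]
      simp only [mul_sub, sub_mul, add_mul, smul_mul_assoc, mul_assoc]
    have hcount := hb.1 ((z - z * β) + s • g)
    have hmem1 : ν ∈ spectrum ℂ (((z - z * β) + s • g) * b) \ {0} :=
      ⟨by rw [← hform]; exact hν2, by simpa using hν0⟩
    have hmem2 : s ∈ spectrum ℂ (((z - z * β) + s • g) * b) \ {0} :=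
      ⟨by rw [← hform]; exact hs2, by simpa using hs0⟩
    have hgt : 1 < (spectrum ℂ (((z - z * β) + s • g) * b) \ {0}).ncard := by
      rw [Set.one_lt_ncard hcount.1]
      exact ⟨_, hmem1, _, hmem2, fun hcon => hsν hcon.symm⟩
    have := hcount.2
    omega
  have hb1 : b = b * g * b := by
    rw [hm] at hm0
    exact sub_eq_zero.mp hm0
  have hbgb : b = (lam⁻¹ • (b * y)) * p * (x * b) := by
    conv_lhs => rw [hb1]
    rw [hg]
    simp only [smul_mul_assoc, mul_smul_comm, mul_assoc]
  rw [hbgb]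
  exact mem_idealGen_single p _ _

end Dichotomy

end RankOneNC

open RankOneNC in
/-- If the socle contains two orthogonal nonzero minimal ideals `J_p`, `J_q` generated by
rank one projections, then the set `R₁` of rank one elements is not connected: `J_p ∩ R₁`
is a nonempty proper clopen subset of `R₁`. -/
theorem rank_one_set_not_connected {A : Type*} [NormedRing A] [NormedAlgebra ℂ A]
    [CompleteSpace A]
    (hss : ∀ a : A, (∀ x : A, spectrum ℂ (a * x) ⊆ {0}) → a = 0)
    (p q : A) (hp : IsIdempotentElem p) (hp1 : hasRank p 1)
    (hq : IsIdempotentElem q) (hq1 : hasRank q 1)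
    (horth : ∀ a ∈ idealGen p, ∀ b ∈ idealGen q, a * b = 0 ∧ b * a = 0) :
    ¬ IsPreconnected {a : A | hasRank a 1} ∧
    (idealGen p ∩ {a : A | hasRank a 1}).Nonempty ∧
    idealGen p ∩ {a : A | hasRank a 1} ≠ {a : A | hasRank a 1} ∧
    IsClopen {x : {a : A // hasRank a 1} | (x : A) ∈ idealGen p} := by
  have hpp : p * p = p := hp
  have hp0 : p ≠ 0 := hasRank_one_ne_zero hp1
  have hq0 : q ≠ 0 := hasRank_one_ne_zero hq1
  have hpJ : p ∈ idealGen p := by simpa using mem_idealGen_single p 1 1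
  have hqJq : q ∈ idealGen q := by simpa using mem_idealGen_single q 1 1
  have hqnJ : q ∉ idealGen p := by
    intro hqJ
    have h0 := (horth q hqJ q hqJq).1
    rw [hq] at h0
    exact hq0 h0
  have hdich : ∀ b : A, hasRank b 1 → b ∉ idealGen p → ∀ x, p * x * b = 0 := by
    intro b hb hnb x
    by_contra hne
    exact hnb (dichotomy hpp hp0 hp1.1 hss hb hne)
  have hsepfar : ∀ b b' u : A, (∀ x, p * x * b' = 0) → b ∈ idealGen p →
      ∀ lam : ℂ, lam ≠ 0 →
      (lam ∈ spectrum ℂ (u * b) ∨ lam ∈ spectrum ℂ (u * b')) →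
      ‖lam‖ / ((‖u‖ + 1) * (‖(1:A)‖ + 1)) ≤ ‖b' - b‖ := by
    intro b b' u hTb' hbJ lam hl0 hlm
    have h1 : ∀ z, b * z * b' = 0 := jp_ann hbJ hTb'
    have h2 : ∀ z, b' * z * b = 0 := ann_jp hss hbJ hTb'
    have hK : (0:ℝ) < (‖u‖ + 1) * (‖(1:A)‖ + 1) := by positivity
    rw [div_le_iff₀ hK]
    rcases hlm with hlm | hlm
    · have hsep := sep h1 h2 hl0 hlm
      rw [norm_sub_rev] at hsep
      nlinarith [norm_nonneg (b' - b), norm_nonneg u, norm_nonneg (1:A)]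
    · have hsep := sep h2 h1 hl0 hlm
      nlinarith [norm_nonneg (b' - b), norm_nonneg u, norm_nonneg (1:A)]
  have hClopen : IsClopen {x : {a : A // hasRank a 1} | (x : A) ∈ idealGen p} := by
    constructor
    · rw [← isOpen_compl_iff, Metric.isOpen_iff]
      rintro ⟨b, hb⟩ hbmem
      obtain ⟨u, lam, hl0, hlm⟩ := hasRank_one_witness hb
      have hL : (0:ℝ) < ‖lam‖ := norm_pos_iff.mpr hl0
      refine ⟨‖lam‖ / ((‖u‖ + 1) * (‖(1:A)‖ + 1)), by positivity, ?_⟩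
      rintro ⟨b', hb'⟩ hdist hmem'
      have hmem'' : b' ∈ idealGen p := hmem'
      have hTb : ∀ x, p * x * b = 0 := hdich b hb hbmem
      have hfar := hsepfar b' b u hTb hmem'' lam hl0 (Or.inr hlm)
      rw [Metric.mem_ball, Subtype.dist_eq, dist_eq_norm] at hdist
      simp only at hdist
      rw [norm_sub_rev] at hdist
      exact absurd (lt_of_le_of_lt hfar hdist) (lt_irrefl _)
    · rw [Metric.isOpen_iff]
      rintro ⟨b, hb⟩ hbmem
      have hbJ : b ∈ idealGen p := hbmem
      obtain ⟨u, lam, hl0, hlm⟩ := hasRank_one_witness hb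
      have hL : (0:ℝ) < ‖lam‖ := norm_pos_iff.mpr hl0
      refine ⟨‖lam‖ / ((‖u‖ + 1) * (‖(1:A)‖ + 1)), by positivity, ?_⟩
      rintro ⟨b', hb'⟩ hdist
      show b' ∈ idealGen p
      by_contra hnb'
      have hTb' : ∀ x, p * x * b' = 0 := hdich b' hb' hnb'
      have hfar := hsepfar b b' u hTb' hbJ lam hl0 (Or.inl hlm)
      rw [Metric.mem_ball, Subtype.dist_eq, dist_eq_norm] at hdist
      simp only at hdist
      exact absurd (lt_of_le_of_lt hfar hdist) (lt_irrefl _)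
  have hNE : (idealGen p ∩ {a : A | hasRank a 1}).Nonempty := ⟨p, hpJ, hp1⟩
  have hProper : idealGen p ∩ {a : A | hasRank a 1} ≠ {a : A | hasRank a 1} := by
    intro heq
    have hqmem : q ∈ idealGen p ∩ {a : A | hasRank a 1} := by
      rw [heq]; exact hq1
    exact hqnJ hqmem.1
  refine ⟨?_, hNE, hProper, hClopen⟩
  intro hconn
  haveI hpc : PreconnectedSpace {a : A // hasRank a 1} :=
    isPreconnected_iff_preconnectedSpace.mp hconn
  rcases isClopen_iff.mp hClopen with h | h
  · have : (⟨p, hp1⟩ : {a : A // hasRank a 1}) ∈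
        {x : {a : A // hasRank a 1} | (x : A) ∈ idealGen p} := hpJ
    rw [h] at this
    exact this
  · have : (⟨q, hq1⟩ : {a : A // hasRank a 1}) ∈
        {x : {a : A // hasRank a 1} | (x : A) ∈ idealGen p} := by
      rw [h]; trivial
    exact hqnJ this
end
end

section
/- Let A be a complex unital Banach algebra, p ∈ A a nonzero idempotent that is not invertible, and suppose q is another idempotent such that there exists a continuous path of idempotents in A from p to q. Then q = v p v⁻¹ for some v in the principal component G₁(A) of the invertible group. -/
/-!
For idempotents `e` and `f`, the element `w = f e + (1 - f)(1 - e)` intertwines them,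
`f w = w e`, and `1 - w = f (f - e) + (e - f) e` is small when `f` is close to `e`. Then `w`
lies in the unit ball around `1`, which is convex and consists of units, so `w ∈ G₁(A)` and
`f = w e w⁻¹`. Hence conjugacy by `G₁(A)` holds locally along the path, and an equivalence
relation with open classes on the connected interval `[0, 1]` has a single class.
-/

namespace IsIdempotentElem

variable {R : Type*} [Ring R] {e f : R}

theorem mul_intertwiner (he : IsIdempotentElem e) (hf : IsIdempotentElem f) :
    f * (f * e + (1 - f) * (1 - e)) = (f * e + (1 - f) * (1 - e)) * e := by
  have hleft : f * (f * e + (1 - f) * (1 - e)) = f * e := by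
    rw [mul_add, ← mul_assoc, ← mul_assoc, hf.eq, hf.mul_one_sub_self, zero_mul, add_zero]
  have hright : (f * e + (1 - f) * (1 - e)) * e = f * e := by
    rw [add_mul, mul_assoc, mul_assoc, he.eq, he.one_sub_mul_self, mul_zero, add_zero]
  rw [hleft, hright]

theorem one_sub_intertwiner (he : IsIdempotentElem e) (hf : IsIdempotentElem f) :
    1 - (f * e + (1 - f) * (1 - e)) = f * (f - e) + (e - f) * e := by
  calc 1 - (f * e + (1 - f) * (1 - e)) = f * f + e * e - 2 * (f * e) := by
        rw [hf.eq, he.eq]; noncomm_ring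
    _ = f * (f - e) + (e - f) * e := by noncomm_ring

end IsIdempotentElem

section NormedRing

open Topology

variable {A : Type*} [NormedRing A] [HasSummableGeomSeries A] [NormedSpace ℝ A]

theorem Units.mem_connectedComponent_one_of_norm_sub_lt {v : Aˣ}
    (hv : ‖(v : A) - 1‖ < 1) : v ∈ connectedComponent (1 : Aˣ) := by
  have hball : Units.val '' (Units.val ⁻¹' Metric.ball (1 : A) 1) = Metric.ball 1 1 := by
    refine Set.image_preimage_eq_of_subset fun x hx ↦ ?_
    by_contra hx'
    exact nonunits.subset_compl_ball (fun h ↦ hx' ⟨h.unit, rfl⟩) hx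
  have hconn : IsPreconnected (Units.val ⁻¹' Metric.ball (1 : A) 1 : Set Aˣ) := by
    rw [← Units.isOpenEmbedding_val.isInducing.isPreconnected_image, hball]
    exact (convex_ball 1 1).isPreconnected
  refine hconn.subset_connectedComponent ?_ ?_ <;> simp [dist_eq_norm, hv]

theorem IsIdempotentElem.exists_conj_of_norm_sub_mul_lt {e f : A}
    (he : IsIdempotentElem e) (hf : IsIdempotentElem f) (h : ‖f - e‖ * (‖f‖ + ‖e‖) < 1) :
    ∃ v : Aˣ, v ∈ connectedComponent (1 : Aˣ) ∧ f = (v : A) * e * ((v⁻¹ : Aˣ) : A) := by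
  set w := f * e + (1 - f) * (1 - e)
  have hw : ‖w - 1‖ < 1 :=
    calc ‖w - 1‖ = ‖f * (f - e) + (e - f) * e‖ := by rw [norm_sub_rev, one_sub_intertwiner he hf]
      _ ≤ ‖f‖ * ‖f - e‖ + ‖e - f‖ * ‖e‖ := norm_add_le_of_le (norm_mul_le _ _) (norm_mul_le _ _)
      _ = ‖f - e‖ * (‖f‖ + ‖e‖) := by rw [norm_sub_rev e f]; ring
      _ < 1 := h
  have hunit : IsUnit w := by
    by_contra hw'
    exact nonunits.subset_compl_ball hw' (mem_ball_iff_norm.2 hw)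
  refine ⟨hunit.unit, Units.mem_connectedComponent_one_of_norm_sub_lt hw, ?_⟩
  rw [IsUnit.unit_spec, ← mul_intertwiner he hf, mul_assoc, IsUnit.mul_val_inv, mul_one]

theorem exists_conj_of_continuous_isIdempotentElem {X : Type*}
    [TopologicalSpace X] [PreconnectedSpace X] {γ : X → A} (hγ : Continuous γ)
    (hidem : ∀ x, IsIdempotentElem (γ x)) (x y : X) :
    ∃ v : Aˣ, v ∈ connectedComponent (1 : Aˣ) ∧ γ y = (v : A) * γ x * ((v⁻¹ : Aˣ) : A) := by
  refine PreconnectedSpace.induction₂'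
    (fun x y ↦ ∃ v : Aˣ, v ∈ connectedComponent (1 : Aˣ) ∧ γ y = (v : A) * γ x * ((v⁻¹ : Aˣ) : A))
    (fun x ↦ ?_) ⟨?_⟩ x y
  · have hnear : ∀ᶠ y in 𝓝 x, ‖γ y - γ x‖ * (‖γ y‖ + ‖γ x‖) < 1 ∧
        ‖γ x - γ y‖ * (‖γ x‖ + ‖γ y‖) < 1 :=
      (ContinuousAt.eventually_lt (by fun_prop) continuousAt_const (by simp)).and
        (ContinuousAt.eventually_lt (by fun_prop) continuousAt_const (by simp))
    filter_upwards [hnear] with y ⟨hxy, hyx⟩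
    exact ⟨(hidem x).exists_conj_of_norm_sub_mul_lt (hidem y) hxy,
      (hidem y).exists_conj_of_norm_sub_mul_lt (hidem x) hyx⟩
  · rintro x y z ⟨v, hv, hy⟩ ⟨w, hw, hz⟩
    exact ⟨w * v, mul_mem_connectedComponent_one hw hv, by rw [hz, hy]; simp [mul_assoc]⟩

end NormedRing

theorem idempotent_path_implies_similar_general {A : Type*} [NormedRing A] [NormedAlgebra ℂ A]
    [CompleteSpace A]
    (p q : A)
    (γ : Path p q) (hγ : ∀ t : unitInterval, IsIdempotentElem (γ t)) :
    ∃ v : Aˣ, v ∈ connectedComponent (1 : Aˣ) ∧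
      q = (v : A) * p * ((v⁻¹ : Aˣ) : A) := by
  simpa using exists_conj_of_continuous_isIdempotentElem γ.continuous hγ 0 1

/-- Zemánek's theorem: idempotents connected by a continuous path of idempotents are
similar via an invertible element of the principal component of the invertible group. -/
theorem idempotent_path_implies_similar {A : Type*} [NormedRing A] [NormedAlgebra ℂ A]
    [CompleteSpace A]
    (p q : A) (hp : IsIdempotentElem p) (hp0 : p ≠ 0) (hpni : ¬ IsUnit p)
    (γ : Path p q) (hγ : ∀ t : unitInterval, IsIdempotentElem (γ t)) :
    ∃ v : Aˣ, v ∈ connectedComponent (1 : Aˣ) ∧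
      q = (v : A) * p * ((v⁻¹ : Aˣ) : A) :=
  idempotent_path_implies_similar_general p q γ hγ
end

section
/- Let A be a complex semisimple unital Banach algebra with nonzero socle, equipped with the trace Tr on Soc(A). Let f : ℂ → A be given by f(λ) = (1-λ)p + λ r, where p and r are rank one idempotents with r ∈ Ap (so f(λ) ∈ Ap for all λ). Then the set D = { λ ∈ ℂ : σ(f(λ)) = {0} or σ(f(λ)) is a single point } equals { λ : Tr(f(λ)) = 0 }, and on ℂ \ D the map g(λ) = f(λ)/Tr(f(λ)) is an analytic path of rank one idempotents connecting p and r. -/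
open Polynomial in
theorem spectrum_subset_of_mul_self_eq_smul (𝕜 : Type*) {A : Type*} [Field 𝕜] [Ring A]
    [Algebra 𝕜 A] {a : A} {s : 𝕜} (h : a * a = s • a) : spectrum 𝕜 a ⊆ {0, s} := by
  nontriviality A
  refine (Set.image_subset_iff.mp (spectrum.subset_polynomial_aeval a (X ^ 2 - C s * X))).trans
    fun μ hμ => ?_
  have hμ : μ * (μ - s) = 0 := by
    simpa [pow_two, h, Algebra.smul_def, mul_sub, mul_comm μ s] using hμ
  rcases mul_eq_zero.mp hμ with hμ | hμ
  · exact Or.inl hμ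
  · exact Or.inr (sub_eq_zero.mp hμ)

theorem IsIdempotentElem.one_mem_spectrum (𝕜 : Type*) {A : Type*} [Field 𝕜] [Ring A]
    [Algebra 𝕜 A] {q : A} (hq : IsIdempotentElem q) (hq0 : q ≠ 0) : (1 : 𝕜) ∈ spectrum 𝕜 q :=
  fun hu => hq0 <| hu.mul_right_eq_zero.mp <| by
    rw [map_one, sub_mul, one_mul, hq.eq, sub_self]

theorem IsIdempotentElem.eq_one_of_mul_self_eq_smul {𝕜 A : Type*} [Field 𝕜] [Ring A]
    [Algebra 𝕜 A] {q : A} {s : 𝕜} (hq : IsIdempotentElem q) (hq0 : q ≠ 0)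
    (h : q * q = s • q) : s = 1 := by
  have : (s - 1) • q = 0 := by rw [sub_smul, ← h, hq.eq, one_smul, sub_self]
  exact sub_eq_zero.mp ((smul_eq_zero.mp this).resolve_right hq0)

theorem IsIdempotentElem.not_isUnit_mul_left {M : Type*} [Monoid M] {p : M}
    (hp : IsIdempotentElem p) (hpu : ¬ IsUnit p) (z : M) : ¬ IsUnit (z * p) := by
  rintro ⟨u, hu⟩
  have hinv : (↑u⁻¹ * z) * p = 1 := by rw [mul_assoc, ← hu, u.inv_mul]
  refine hpu ⟨1, ?_⟩
  calc ((1 : Mˣ) : M) = (↑u⁻¹ * z) * p := hinv.symm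
    _ = (↑u⁻¹ * z) * (p * p) := by rw [hp.eq]
    _ = p := by rw [← mul_assoc, hinv, one_mul]

section Rank

variable {A : Type*} [NormedRing A] [NormedAlgebra ℂ A]

theorem hasRank.ne_zero {a : A} {n : ℕ} (h : hasRank a n) (hn : n ≠ 0) : a ≠ 0 := by
  rintro rfl
  obtain ⟨x, hx⟩ := h.2
  have hσ : spectrum ℂ (x * 0) \ {0} = ∅ := by
    simpa [Set.sdiff_eq_empty] using spectrum_subset_of_mul_self_eq_smul ℂ (a := x * 0) (s := 0)
      (by simp)
  rw [hσ, Set.ncard_empty] at hx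
  exact hn hx.symm

theorem rankLE_one_of_forall_mul_self_eq_smul {a : A}
    (h : ∀ x : A, ∃ t : ℂ, (x * a) * (x * a) = t • (x * a)) : rankLE a 1 := by
  intro x
  obtain ⟨t, ht⟩ := h x
  have hsub : spectrum ℂ (x * a) \ {0} ⊆ {t} := fun μ ⟨hμ, hμ0⟩ =>
    (spectrum_subset_of_mul_self_eq_smul ℂ ht hμ).resolve_left hμ0
  exact ⟨(Set.finite_singleton t).subset hsub,
    (Set.ncard_le_ncard hsub).trans (Set.ncard_singleton t).le⟩

theorem IsIdempotentElem.hasRank_one {q : A} (hq : IsIdempotentElem q) (hq0 : q ≠ 0)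
    (hle : rankLE q 1) : hasRank q 1 := by
  refine ⟨hle, 1, Set.ncard_eq_one.mpr ⟨1, ?_⟩⟩
  rw [one_mul, Set.eq_singleton_iff_unique_mem]
  exact ⟨⟨hq.one_mem_spectrum ℂ hq0, one_ne_zero⟩, fun μ ⟨hμ, hμ0⟩ =>
    (hq.spectrum_subset ℂ hμ).resolve_left hμ0⟩

end Rank

theorem path_of_rank_one_idempotents_general {A : Type*} [NormedRing A] [NormedAlgebra ℂ A]
    (p r : A) (hp : IsIdempotentElem p) (hr : IsIdempotentElem r)
    (hr1 : hasRank r 1)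
    (hpni : ¬ IsUnit p)
    (hrAp : ∃ z : A, r = z * p)
    (Tr : A →ₗ[ℂ] ℂ)
    (hTr : ∀ a : A, (∃ z : A, a = z * p) → a * a = Tr a • a)
    (f : ℂ → A) (hf : ∀ lam : ℂ, f lam = (1 - lam) • p + lam • r)
    (g : ℂ → A) (hg : ∀ lam : ℂ, g lam = (Tr (f lam))⁻¹ • f lam) :
    {lam : ℂ | (spectrum ℂ (f lam)).Subsingleton} = {lam : ℂ | Tr (f lam) = 0} ∧
    DifferentiableOn ℂ g {lam : ℂ | Tr (f lam) ≠ 0} ∧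
    (∀ lam : ℂ, Tr (f lam) ≠ 0 → IsIdempotentElem (g lam) ∧ hasRank (g lam) 1) ∧
    Tr (f 0) ≠ 0 ∧ Tr (f 1) ≠ 0 ∧ g 0 = p ∧ g 1 = r := by
  obtain ⟨z, hzr⟩ := hrAp
  have hfAp : ∀ lam, f lam = ((1 - lam) • p + lam • z) * p := fun lam => by
    rw [hf, add_mul, smul_mul_assoc, smul_mul_assoc, hp.eq, ← hzr]
  have hr0 : r ≠ 0 := hr1.ne_zero one_ne_zero
  have hp0 : p ≠ 0 := by rintro rfl; exact hr0 (by rw [hzr, mul_zero])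
  have hTrp : Tr p = 1 := hp.eq_one_of_mul_self_eq_smul hp0 (hTr p ⟨p, hp.eq.symm⟩)
  have hTrr : Tr r = 1 := hr.eq_one_of_mul_self_eq_smul hr0 (hTr r ⟨z, hzr⟩)
  have hTrf : ∀ lam, Tr (f lam) = 1 := fun lam => by simp [hf, hTrp, hTrr]
  have hgf : g = f := funext fun lam => by rw [hg, hTrf, inv_one, one_smul]
  have hfidem : ∀ lam, IsIdempotentElem (f lam) := fun lam => by
    simpa [IsIdempotentElem, hTrf] using hTr _ ⟨_, hfAp lam⟩
  have hf0 : ∀ lam, f lam ≠ 0 := fun lam h => by simpa [h] using hTrf lam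
  refine ⟨?_, ?_, fun lam _ => ?_, by simp [hTrf], by simp [hTrf], by simp [hgf, hf],
    by simp [hgf, hf]⟩
  · ext lam
    simp only [Set.mem_ofPred_eq, hTrf, one_ne_zero, iff_false]
    intro hσ
    have h0 : (0 : ℂ) ∈ spectrum ℂ (f lam) :=
      spectrum.zero_mem ℂ (hfAp lam ▸ hp.not_isUnit_mul_left hpni _)
    exact zero_ne_one (hσ h0 ((hfidem lam).one_mem_spectrum ℂ (hf0 lam)))
  · rw [hgf, funext hf]
    exact Differentiable.differentiableOn (by fun_prop)
  · rw [hgf]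
    have hxAp : ∀ x, x * f lam = (x * ((1 - lam) • p + lam • z)) * p := fun x => by
      rw [hfAp lam, mul_assoc]
    exact ⟨hfidem lam, (hfidem lam).hasRank_one (hf0 lam)
      (rankLE_one_of_forall_mul_self_eq_smul fun x => ⟨_, hTr _ ⟨_, hxAp x⟩⟩)⟩

/-- For `f(λ) = (1-λ)p + λr` with `p, r` rank one idempotents and `r ∈ Ap`, the set `D` of
`λ` for which `σ(f(λ))` is a single point is `{λ : Tr(f(λ)) = 0}`, and on its complement
`g(λ) = f(λ)/Tr(f(λ))` is an analytic path of rank one idempotents joining `p` to `r`. -/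
theorem path_of_rank_one_idempotents {A : Type*} [NormedRing A] [NormedAlgebra ℂ A]
    [CompleteSpace A]
    (hss : ∀ a : A, (∀ x : A, spectrum ℂ (a * x) ⊆ {0}) → a = 0)
    (p r : A) (hp : IsIdempotentElem p) (hr : IsIdempotentElem r)
    (hp1 : hasRank p 1) (hr1 : hasRank r 1)
    (hpni : ¬ IsUnit p)
    (hrAp : ∃ z : A, r = z * p)
    (Tr : A →ₗ[ℂ] ℂ)
    (hTr : ∀ a : A, (∃ z : A, a = z * p) → a * a = Tr a • a)
    (f : ℂ → A) (hf : ∀ lam : ℂ, f lam = (1 - lam) • p + lam • r)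
    (g : ℂ → A) (hg : ∀ lam : ℂ, g lam = (Tr (f lam))⁻¹ • f lam) :
    {lam : ℂ | (spectrum ℂ (f lam)).Subsingleton} = {lam : ℂ | Tr (f lam) = 0} ∧
    DifferentiableOn ℂ g {lam : ℂ | Tr (f lam) ≠ 0} ∧
    (∀ lam : ℂ, Tr (f lam) ≠ 0 → IsIdempotentElem (g lam) ∧ hasRank (g lam) 1) ∧
    Tr (f 0) ≠ 0 ∧ Tr (f 1) ≠ 0 ∧ g 0 = p ∧ g 1 = r :=
  path_of_rank_one_idempotents_general p r hp hr hr1 hpni hrAp Tr hTr f hf g hg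
end

section
/- Let Ã be a complex unital Banach algebra of the form Ã = A ⊕ M (with multiplication (a,m)(b,n) = (ab + Ω(mn), mb + an + Γ(mn)) extending that of the semisimple Banach algebra A), and suppose that for every rank one projection p in a generating class P of Soc(A) and all x, z ∈ A one has (pz, 0)(a, u)(x, 0)(p, 0) = (p z a x p, 0). Then the Jacobson radical of Ã is contained in {(0, u) : u ∈ M}; i.e., if (a, u) ∈ Rad(Ã) then a = 0. -/
/-!
Let `w = (a, u)` lie in the radical of `B = A ⊕ M`. For `p ∈ P` and `y, x ∈ A`, the element
`c = p y a x p` of the corner `pAp` is carried by the embedding to `(p y, 0) w (x, 0) (p, 0)`,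
which is quasinilpotent in `B` because `w` is in the radical. The hypothesis on products shows that
the corner `(p, 0) B (p, 0)` lies in `A`, so compressing the inverse of `μ - c` taken in `B` to this
corner gives an inverse of `μ - c` inside `pAp`; hence `c` is quasinilpotent in `A`. Moving `p`
around the product, `a x p y` is quasinilpotent for all `y`, so semisimplicity forces `a x p = 0`
for all `x` and `p ∈ P`, and therefore `a = 0`.
-/

noncomputable section

open Set

section Jacobson

variable {R : Type*} [Ring R]

theorem isUnit_one_add_of_mem_jacobson_bot {x : R} (hx : x ∈ Ideal.jacobson (⊥ : Ideal R)) :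
    IsUnit (1 + x) := by
  have hleft : ∀ y ∈ Ideal.jacobson (⊥ : Ideal R), ∃ z, z * (1 + y) = 1 := fun y hy => by
    obtain ⟨z, hz⟩ := Ideal.mem_jacobson_iff.1 hy 1
    refine ⟨z, ?_⟩
    rwa [Ideal.mem_bot, mul_one, sub_eq_zero, add_comm, ← mul_one_add] at hz
  obtain ⟨z, hz⟩ := hleft x hx
  -- `z = 1 + (-(z * x))` with `-(z * x)` again in the radical, so `z` has a left inverse too
  obtain ⟨z', hz'⟩ := hleft _ (neg_mem (Ideal.mul_mem_left _ z hx))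
  have hz_eq : 1 + -(z * x) = z := by rw [← sub_eq_add_neg, sub_eq_iff_eq_add, ← mul_one_add, hz]
  rw [hz_eq] at hz'
  have hz'_eq : z' = 1 + x := left_inv_eq_right_inv hz' hz
  exact ⟨⟨1 + x, z, hz'_eq ▸ hz', hz⟩, rfl⟩

end Jacobson

section Spectrum

variable {𝕜 A B : Type*} [Field 𝕜] [Ring A] [Ring B] [Algebra 𝕜 A] [Algebra 𝕜 B]

theorem spectrum_subset_zero_mul_comm {a b : A} (h : spectrum 𝕜 (a * b) ⊆ {0}) :
    spectrum 𝕜 (b * a) ⊆ {0} := by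
  rw [← sdiff_eq_empty, ← spectrum.nonzero_mul_comm, sdiff_eq_empty]
  exact h

theorem spectrum_subset_zero_of_mem_jacobson_bot {w : B}
    (hw : w ∈ Ideal.jacobson (⊥ : Ideal B)) : spectrum 𝕜 w ⊆ {0} := by
  intro μ hμ
  by_contra hμ0
  have hfactor : algebraMap 𝕜 B μ - w = algebraMap 𝕜 B μ * (1 + -(algebraMap 𝕜 B μ⁻¹ * w)) := by
    rw [mul_add, mul_one, mul_neg, ← mul_assoc, ← map_mul, mul_inv_cancel₀ hμ0, map_one,
      one_mul, sub_eq_add_neg]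
  refine spectrum.mem_iff.1 hμ (hfactor ▸ ?_)
  exact ((isUnit_iff_ne_zero.2 hμ0).map (algebraMap 𝕜 B)).mul
    (isUnit_one_add_of_mem_jacobson_bot (neg_mem (Ideal.mul_mem_left _ _ hw)))

theorem spectrum_mul_mul_subset_zero_of_mem_jacobson_bot {w : B}
    (hw : w ∈ Ideal.jacobson (⊥ : Ideal B)) (g h : B) : spectrum 𝕜 (g * w * h) ⊆ {0} :=
  spectrum_subset_zero_mul_comm
    (spectrum_subset_zero_of_mem_jacobson_bot (Ideal.mul_mem_left _ h (Ideal.mul_mem_left _ g hw)))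

theorem isUnit_algebraMap_sub_of_corner_inverse {p c q : A} (hpc : p * c = c) (hcp : c * p = c)
    {μ : 𝕜} (hμ : μ ≠ 0) (hr : (algebraMap 𝕜 A μ - c) * q = p)
    (hl : q * (algebraMap 𝕜 A μ - c) = p) : IsUnit (algebraMap 𝕜 A μ - c) := by
  have hr' : (algebraMap 𝕜 A μ - c) * (1 - p) = μ • (1 - p) := by
    rw [sub_mul, mul_one_sub c, hcp, sub_self, sub_zero, Algebra.smul_def]
  have hl' : (1 - p) * (algebraMap 𝕜 A μ - c) = μ • (1 - p) := by
    rw [one_sub_mul, mul_sub, hpc, ← Algebra.commutes, sub_sub_sub_cancel_right, ← mul_one_sub,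
      ← Algebra.smul_def]
  refine ⟨⟨_, μ⁻¹ • (1 - p) + q, ?_, ?_⟩, rfl⟩
  · rw [mul_add, hr, mul_smul_comm, hr', inv_smul_smul₀ hμ, sub_add_cancel]
  · rw [add_mul, hl, smul_mul_assoc, hl', inv_smul_smul₀ hμ, sub_add_cancel]

theorem spectrum_diff_zero_subset_of_corner (φ : A →ₐ[𝕜] B) (hφ : Function.Injective φ) {p c : A}
    (hp : IsIdempotentElem p) (hpc : p * c = c) (hcp : c * p = c)
    (hcorner : ∀ b : B, φ p * b * φ p ∈ φ.range) : spectrum 𝕜 c \ {0} ⊆ spectrum 𝕜 (φ c) := by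
  rintro μ ⟨hμ, hμ0 : μ ≠ 0⟩
  by_contra hμB
  obtain ⟨v, hv⟩ := spectrum.notMem_iff.1 hμB
  obtain ⟨q, hq : φ q = _⟩ := hcorner ↑v⁻¹
  set t := algebraMap 𝕜 A μ - c
  have hφt : φ t = v := by rw [hv, map_sub, AlgHom.commutes]
  have htp : φ t * φ p = φ p * φ t := by
    rw [← map_mul, ← map_mul, sub_mul, mul_sub, hcp, hpc, Algebra.commutes]
  have hr : t * q = p := hφ <| by
    rw [map_mul, hq, ← mul_assoc, ← mul_assoc, htp, mul_assoc (φ p), hφt, Units.mul_inv, mul_one,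
      ← map_mul, hp.eq]
  have hl : q * t = p := hφ <| by
    rw [map_mul, hq, mul_assoc, ← htp, ← mul_assoc, mul_assoc (φ p), hφt, Units.inv_mul, mul_one,
      ← map_mul, hp.eq]
  exact spectrum.mem_iff.1 hμ (isUnit_algebraMap_sub_of_corner_inverse hpc hcp hμ0 hr hl)

end Spectrum

theorem radical_of_extension_in_M_general {A B : Type*} [NormedRing A] [NormedAlgebra ℂ A]
    [NormedRing B] [NormedAlgebra ℂ B]
    (hss : ∀ a : A, (∀ x : A, spectrum ℂ (a * x) ⊆ {0}) → a = 0)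
    (e : A →ₐ[ℂ] B) (M : Submodule ℂ B)
    (hdecomp : ∀ x : B, ∃ (a : A) (u : B), u ∈ M ∧ x = e a + u)
    (huniq : ∀ (a : A) (u : B), u ∈ M → e a + u = 0 → a = 0)
    (P : Set A)
    (hP : ∀ p ∈ P, IsIdempotentElem p ∧ hasRank p 1)
    (hPgen : ∀ b : A, (∀ p ∈ P, ∀ x : A, b * x * p = 0) → b = 0)
    (hmulid : ∀ p ∈ P, ∀ (z x a : A), ∀ u ∈ M,
      e (p * z) * (e a + u) * e x * e p = e (p * z * a * x * p))
    (a : A) (u : B) (hu : u ∈ M)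
    (hrad : e a + u ∈ Ideal.jacobson (⊥ : Ideal B)) :
    a = 0 := by
  have he : Function.Injective e := fun a₁ a₂ h =>
    sub_eq_zero.1 (huniq _ 0 M.zero_mem (by rw [add_zero, map_sub, h, sub_self]))
  have hcorner : ∀ p ∈ P, ∀ b : B, e p * b * e p ∈ e.range := by
    intro p hp b
    obtain ⟨a', u', hu', rfl⟩ := hdecomp b
    exact ⟨p * a' * p, by simpa using (hmulid p hp 1 1 a' u' hu').symm⟩
  refine hPgen a fun p hp x => hss _ fun y => ?_
  have hpp : IsIdempotentElem p := (hP p hp).1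
  have hσB : spectrum ℂ (e (p * y * a * x * p)) ⊆ {0} := by
    rw [← hmulid p hp y x a u hu, mul_assoc]
    exact spectrum_mul_mul_subset_zero_of_mem_jacobson_bot hrad _ _
  have hσA : spectrum ℂ (p * y * a * x * p) ⊆ {0} := by
    have hdiff := (spectrum_diff_zero_subset_of_corner e he hpp
      (by simp only [← mul_assoc, hpp.eq]) (by rw [mul_assoc _ p p, hpp.eq]) (hcorner p hp)).trans
      hσB
    simpa using sdiff_singleton_subset_iff.1 hdiff
  have hσ : spectrum ℂ (y * a * x * p) ⊆ {0} := by
    have h := spectrum_subset_zero_mul_comm (a := p) (b := y * a * x * p)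
      (by simpa only [mul_assoc] using hσA)
    rwa [mul_assoc _ p p, hpp.eq] at h
  exact spectrum_subset_zero_mul_comm (a := y) (by simpa only [mul_assoc] using hσ)

/-- The radical of the extension `B = A ⊕ M` lies inside `{(0, u) : u ∈ M}`: if
`(a, u) ∈ Rad(B)` then `a = 0`. -/
theorem radical_of_extension_in_M {A B : Type*} [NormedRing A] [NormedAlgebra ℂ A]
    [CompleteSpace A] [NormedRing B] [NormedAlgebra ℂ B] [CompleteSpace B]
    (hss : ∀ a : A, (∀ x : A, spectrum ℂ (a * x) ⊆ {0}) → a = 0)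
    (e : A →ₐ[ℂ] B) (M : Submodule ℂ B)
    (hdecomp : ∀ x : B, ∃ (a : A) (u : B), u ∈ M ∧ x = e a + u)
    (huniq : ∀ (a : A) (u : B), u ∈ M → e a + u = 0 → a = 0)
    (P : Set A)
    (hP : ∀ p ∈ P, IsIdempotentElem p ∧ hasRank p 1)
    (hPgen : ∀ b : A, (∀ p ∈ P, ∀ x : A, b * x * p = 0) → b = 0)
    (hmulid : ∀ p ∈ P, ∀ (z x a : A), ∀ u ∈ M,
      e (p * z) * (e a + u) * e x * e p = e (p * z * a * x * p))
    (a : A) (u : B) (hu : u ∈ M)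
    (hrad : e a + u ∈ Ideal.jacobson (⊥ : Ideal B)) :
    a = 0 :=
  radical_of_extension_in_M_general hss e M hdecomp huniq P hP hPgen hmulid a u hu hrad
end
end
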